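/- arXiv:1101.1962 — 8 statements merged into one kernel-verified Lean document; each statement's English description precedes it below -/
import Mathlib

section
/- Let m ≥ 1 and n be natural numbers, let F₂ = ZMod 2, and let λ be the 2m × 2m block matrix over F₂ given by λ = fromBlocks 0 1 1 0 (with m × m blocks). Let ω be an n × n matrix over F₂ with rank(ω) = 2m. If P₁ and P₂ are 2m × n matrices over F₂ satisfying P₁ᵀ · λ · P₁ = ω and P₂ᵀ · λ · P₂ = ω, then there exists a 2m × 2m matrix S over F₂ with Sᵀ · λ · S = λ and P₁ = S · P₂. (Uniqueness, up to symplectic transformation, of the minimal realization of a commutation-relation matrix by Pauli operators.) -/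
open Matrix

/-! Any realization `P` of `ω` (`Pᵀ λ P = ω`) has rank at least `rank ω = 2m`, i.e. full row rank,
so `ker P ⊆ ker ω` is an equality and `P` has a right inverse. With `P₂ Q = 1`, put `S = P₁ Q`:
then `P₁ = S P₂` because `P₁` and `P₂` have the same kernel, and `S` is symplectic because
`Sᵀ λ S = Qᵀ ω Q = (P₂ Q)ᵀ λ (P₂ Q) = λ`. -/

namespace Matrix

variable {K : Type*} [Field K] {l m n : Type*} [Fintype m] [Fintype n]

theorem rank_add_finrank_ker_mulVecLin (A : Matrix l n K) :
    A.rank + Module.finrank K (LinearMap.ker A.mulVecLin) = Fintype.card n := by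
  rw [rank, LinearMap.finrank_range_add_finrank_ker, Module.finrank_fintype_fun_eq_card]

theorem ker_mulVecLin_mul_eq_of_rank_mul_eq (A : Matrix l m K) (P : Matrix m n K)
    (h : (A * P).rank = P.rank) :
    LinearMap.ker (A * P).mulVecLin = LinearMap.ker P.mulVecLin := by
  have hle : LinearMap.ker P.mulVecLin ≤ LinearMap.ker (A * P).mulVecLin := by
    rw [mulVecLin_mul]
    exact LinearMap.ker_le_ker_comp _ _
  refine (Submodule.eq_of_le_of_finrank_eq hle ?_).symm
  have hP := rank_add_finrank_ker_mulVecLin P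
  have hAP := rank_add_finrank_ker_mulVecLin (A * P)
  omega

theorem rank_eq_card_of_card_le_rank_mul (A : Matrix l m K) (P : Matrix m n K)
    (h : Fintype.card m ≤ (A * P).rank) : P.rank = Fintype.card m :=
  le_antisymm P.rank_le_card_height (h.trans (rank_mul_le_right A P))

theorem ker_mulVecLin_eq_of_mul_eq {A : Matrix l m K} {P : Matrix m n K} {ω : Matrix l n K}
    (hP : A * P = ω) (hω : ω.rank = Fintype.card m) :
    LinearMap.ker P.mulVecLin = LinearMap.ker ω.mulVecLin := by
  subst hP
  refine (ker_mulVecLin_mul_eq_of_rank_mul_eq A P ?_).symm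
  rw [hω, rank_eq_card_of_card_le_rank_mul A P hω.ge]

theorem exists_mul_eq_one_of_rank_eq_card [DecidableEq m] (P : Matrix m n K)
    (h : P.rank = Fintype.card m) : ∃ Q : Matrix n m K, P * Q = 1 := by
  have hsurj : LinearMap.range P.mulVecLin = ⊤ := by
    apply Submodule.eq_top_of_finrank_eq
    rw [Module.finrank_fintype_fun_eq_card, ← h, rank]
  classical
  obtain ⟨g, hg⟩ := P.mulVecLin.exists_rightInverse_of_surjective hsurj
  refine ⟨LinearMap.toMatrix' g, toLin'.injective ?_⟩
  rw [toLin'_mul, toLin'_toMatrix', toLin'_one, toLin'_apply', hg]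

theorem mul_mul_eq_of_ker_le [DecidableEq m] {P₁ : Matrix l n K} {P₂ : Matrix m n K}
    {Q : Matrix n m K} (hQ : P₂ * Q = 1)
    (hker : LinearMap.ker P₂.mulVecLin ≤ LinearMap.ker P₁.mulVecLin) : P₁ * Q * P₂ = P₁ := by
  classical
  refine toLin'.injective (LinearMap.ext fun x => ?_)
  have hx : Q *ᵥ (P₂ *ᵥ x) - x ∈ LinearMap.ker P₂.mulVecLin := by
    rw [LinearMap.mem_ker, mulVecLin_apply, mulVec_sub, mulVec_mulVec, hQ, one_mulVec, sub_self]
  have := hker hx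
  rw [LinearMap.mem_ker, mulVecLin_apply, mulVec_sub, sub_eq_zero] at this
  simpa [toLin'_apply, ← mulVec_mulVec] using this

theorem transpose_mul_mul_of_mul_eq_one {R : Type*} [CommSemiring R] [DecidableEq m]
    (B : Matrix m m R) {P₁ P₂ : Matrix m n R} {Q : Matrix n m R}
    (h : P₁ᵀ * B * P₁ = P₂ᵀ * B * P₂) (hQ : P₂ * Q = 1) :
    (P₁ * Q)ᵀ * B * (P₁ * Q) = B := by
  calc (P₁ * Q)ᵀ * B * (P₁ * Q) = Qᵀ * (P₁ᵀ * B * P₁) * Q := by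
        simp only [transpose_mul, Matrix.mul_assoc]
    _ = (P₂ * Q)ᵀ * B * (P₂ * Q) := by
        rw [h]; simp only [transpose_mul, Matrix.mul_assoc]
    _ = B := by simp [hQ]

end Matrix

theorem minimal_realization_unique_up_to_symplectic_general (m n : ℕ)
    (ω : Matrix (Fin n) (Fin n) (ZMod 2)) (hω : ω.rank = 2 * m)
    (P₁ P₂ : Matrix (Fin m ⊕ Fin m) (Fin n) (ZMod 2))
    (h₁ : P₁ᵀ * (Matrix.fromBlocks 0 1 1 0 : Matrix (Fin m ⊕ Fin m) (Fin m ⊕ Fin m) (ZMod 2)) * P₁ = ω)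
    (h₂ : P₂ᵀ * (Matrix.fromBlocks 0 1 1 0 : Matrix (Fin m ⊕ Fin m) (Fin m ⊕ Fin m) (ZMod 2)) * P₂ = ω) :
    ∃ S : Matrix (Fin m ⊕ Fin m) (Fin m ⊕ Fin m) (ZMod 2),
      Sᵀ * Matrix.fromBlocks 0 1 1 0 * S = Matrix.fromBlocks 0 1 1 0 ∧ P₁ = S * P₂ := by
  have hω' : ω.rank = Fintype.card (Fin m ⊕ Fin m) := by simp [hω, two_mul]
  obtain ⟨Q, hQ⟩ := exists_mul_eq_one_of_rank_eq_card P₂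
    (rank_eq_card_of_card_le_rank_mul _ P₂ (h₂ ▸ hω'.ge))
  refine ⟨P₁ * Q, transpose_mul_mul_of_mul_eq_one _ (h₁.trans h₂.symm) hQ,
    (mul_mul_eq_of_ker_le hQ ?_).symm⟩
  rw [ker_mulVecLin_eq_of_mul_eq h₁ hω', ker_mulVecLin_eq_of_mul_eq h₂ hω']

/-- Uniqueness, up to symplectic transformation, of the minimal realization of a
commutation-relation matrix by Pauli operators. -/
theorem minimal_realization_unique_up_to_symplectic (m n : ℕ) (hm : 1 ≤ m)
    (ω : Matrix (Fin n) (Fin n) (ZMod 2)) (hω : ω.rank = 2 * m)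
    (P₁ P₂ : Matrix (Fin m ⊕ Fin m) (Fin n) (ZMod 2))
    (h₁ : P₁ᵀ * (Matrix.fromBlocks 0 1 1 0 : Matrix (Fin m ⊕ Fin m) (Fin m ⊕ Fin m) (ZMod 2)) * P₁ = ω)
    (h₂ : P₂ᵀ * (Matrix.fromBlocks 0 1 1 0 : Matrix (Fin m ⊕ Fin m) (Fin m ⊕ Fin m) (ZMod 2)) * P₂ = ω) :
    ∃ S : Matrix (Fin m ⊕ Fin m) (Fin m ⊕ Fin m) (ZMod 2),
      Sᵀ * Matrix.fromBlocks 0 1 1 0 * S = Matrix.fromBlocks 0 1 1 0 ∧ P₁ = S * P₂ :=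
  minimal_realization_unique_up_to_symplectic_general m n ω hω P₁ P₂ h₁ h₂
end

section
/- Let D ≥ 1, q ≥ 1, r ≥ 2 be integers and let G be a finite set of finitely supported functions g : ℤᴰ → F₂^(2q), each supported inside the cube {0,…,r−1}ᴰ, such that ⟨Tᵤg, Tᵥh⟩ = 0 for all g, h ∈ G and all u, v ∈ ℤᴰ (the stabilizer generators and all their translates pairwise commute). Suppose for some L₀ ≥ 1 there exists O : (ZMod L₀)ᴰ → F₂^(2q) such that ⟨O, ḡᵤ⟩ = 0 for every folded generator ḡᵤ (g ∈ G, u ∈ (ZMod L₀)ᴰ), O is not in the F₂-span of the folded generators, and |supp(O)| · (r−1) < L₀. Then there exists a finitely supported Õ : ℤᴰ → F₂^(2q) with ⟨Õ, Tᵤg⟩ = 0 for all g ∈ G and u ∈ ℤᴰ, such that Õ is not a finite F₂-linear combination of the translates {Tᵤg : g ∈ G, u ∈ ℤᴰ}. -/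
namespace FiniteLogical

variable (D q : ℕ)

/-- Sites of the infinite lattice `ℤᴰ`. -/
abbrev Site (D : ℕ) := Fin D → ℤ

/-- The local Pauli label space `F₂^(2q)`, encoded as `q` pairs `(x_i, z_i)`. -/
abbrev V (q : ℕ) := Fin q → ZMod 2 × ZMod 2

/-- A finite Pauli operator: a finitely supported function `ℤᴰ → F₂^(2q)`. -/
abbrev PauliInf (D q : ℕ) := Site D →₀ V q

/-- The commutation pairing on the infinite lattice:
`⟨v,w⟩ = Σ_s Σ_i (x_i(s)·z'_i(s) + z_i(s)·x'_i(s))`. -/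
def pairInf (v w : PauliInf D q) : ZMod 2 :=
  v.sum fun s a => ∑ i : Fin q, ((a i).1 * (w s i).2 + (a i).2 * (w s i).1)

/-- Translation by `u ∈ ℤᴰ`: `(Tᵤ g)(s) = g(s − u)`. -/
noncomputable def T (u : Site D) (g : PauliInf D q) : PauliInf D q :=
  Finsupp.mapDomain (fun s => s + u) g

/-- Sites of the torus `(ZMod L)ᴰ`. -/
abbrev TorSite (D L : ℕ) := Fin D → ZMod L

/-- A Pauli operator on the torus. -/
abbrev PauliTor (D q L : ℕ) := TorSite D L → V q

/-- The reduction map `π : ℤᴰ → (ZMod L)ᴰ`. -/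
def π (L : ℕ) (s : Site D) : TorSite D L := fun i => (s i : ZMod L)

/-- Folding a finite Pauli operator onto the torus: `ḡ(s̄) = Σ_{π(s) = s̄} g(s)`. -/
def fold (L : ℕ) (g : PauliInf D q) : PauliTor D q L :=
  fun t => g.sum fun s a => if π D L s = t then a else 0

/-- The folded generator `ḡᵤ` for `u ∈ (ZMod L)ᴰ`: the folding of any translate of `g`
by a representative of `u`, i.e. `ḡᵤ(s̄) = (fold g)(s̄ − u)`. -/
def foldedGen (L : ℕ) (g : PauliInf D q) (u : TorSite D L) : PauliTor D q L :=
  fun t => fold D q L g (t - u)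

/-- The commutation pairing on the torus. -/
def pairTor (L : ℕ) [NeZero L] (v w : PauliTor D q L) : ZMod 2 :=
  ∑ t : TorSite D L, ∑ i : Fin q, ((v t i).1 * (w t i).2 + (v t i).2 * (w t i).1)

end FiniteLogical

open FiniteLogical

/-!
Since `|supp O| · (r - 1) < L₀`, in every coordinate direction the projection of `supp O`
misses `r - 1` consecutive residues; translating `O` so that these gaps sit just below the seam
puts its support in the box `{0,…,L₀-r}ᴰ`. Lift `O` to `ℤᴰ` by copying it onto the fundamental
box `{0,…,L₀-1}ᴰ`. A translate of a generator that meets this lift lies in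
`{-(r-1),…,L₀-1}ᴰ`, where it meets the periodic extension of `O` only inside the fundamental
box, so it commutes with the lift exactly as its folding commutes with `O`. Folding sends
translates to folded generators and the lift back to `O`, so the lift is not a combination of
translates.
-/

theorem Finsupp.mapDomain_add_right_apply {G M : Type*} [AddGroup G] [AddCommMonoid M]
    (f : G →₀ M) (c t : G) : f.mapDomain (· + c) t = f (t - c) := by
  simpa using Finsupp.mapDomain_apply (add_left_injective c) f (t - c)

namespace FiniteLogical

def localPair (q : ℕ) : V q →ₗ[ZMod 2] V q →ₗ[ZMod 2] ZMod 2 :=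
  LinearMap.mk₂ (ZMod 2) (fun a b => ∑ i : Fin q, ((a i).1 * (b i).2 + (a i).2 * (b i).1))
    (fun _ _ _ => by
      simp only [← Finset.sum_add_distrib]; exact Finset.sum_congr rfl fun _ _ => by simp; ring)
    (fun _ _ _ => by
      simp only [Finset.mul_sum, smul_eq_mul]; exact Finset.sum_congr rfl fun _ _ => by simp; ring)
    (fun _ _ _ => by
      simp only [← Finset.sum_add_distrib]; exact Finset.sum_congr rfl fun _ _ => by simp; ring)
    (fun _ _ _ => by
      simp only [Finset.mul_sum, smul_eq_mul]; exact Finset.sum_congr rfl fun _ _ => by simp; ring)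

section Pairing

variable {D q : ℕ}

lemma pairInf_eq_sum (v w : PauliInf D q) :
    pairInf D q v w = ∑ s ∈ v.support, localPair q (v s) (w s) := rfl

lemma pairTor_eq_sum {L : ℕ} [NeZero L] (v w : PauliTor D q L) :
    pairTor D q L v w = ∑ t, localPair q (v t) (w t) := rfl

lemma pairInf_eq_sum_support_right (v w : PauliInf D q) :
    pairInf D q v w = ∑ s ∈ w.support, localPair q (v s) (w s) := by
  classical
  rw [pairInf_eq_sum]
  refine (Finset.sum_subset Finset.subset_union_left ?_).trans
    (Finset.sum_subset Finset.subset_union_right ?_).symm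
  all_goals intro s _ hs; simp [Finsupp.notMem_support_iff.mp hs]

lemma pairInf_eq_zero_of_disjoint {v w : PauliInf D q} (h : ∀ s, v s ≠ 0 → w s = 0) :
    pairInf D q v w = 0 :=
  Finset.sum_eq_zero fun s hs => by simp [h s (Finsupp.mem_support_iff.mp hs)]

end Pairing

section Folding

variable {D q : ℕ}

lemma T_apply (u : Site D) (g : PauliInf D q) (s : Site D) : T D q u g s = g (s - u) :=
  Finsupp.mapDomain_add_right_apply g u s

lemma fold_eq_mapDomain (L : ℕ) (g : PauliInf D q) : fold D q L g = ⇑(g.mapDomain (π D L)) := by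
  classical
  ext t : 1
  simp [fold, Finsupp.mapDomain, Finsupp.sum_apply, Finsupp.single_apply]

lemma fold_T (L : ℕ) (u : Site D) (g : PauliInf D q) :
    fold D q L (T D q u g) = foldedGen D q L g (π D L u) := by
  have hπ : π D L ∘ (· + u) = (· + π D L u) ∘ π D L := by
    ext s i; simp [π]
  ext t : 1
  rw [foldedGen, fold_eq_mapDomain, fold_eq_mapDomain, T, ← Finsupp.mapDomain_comp, hπ,
    Finsupp.mapDomain_comp, Finsupp.mapDomain_add_right_apply]

noncomputable def foldLin (L : ℕ) : PauliInf D q →ₗ[ZMod 2] PauliTor D q L :=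
  Finsupp.lcoeFun ∘ₗ Finsupp.lmapDomain (V q) (ZMod 2) (π D L)

lemma foldLin_apply (L : ℕ) (g : PauliInf D q) : foldLin L g = fold D q L g :=
  (fold_eq_mapDomain L g).symm

lemma fold_mem_span_foldedGen {G : Set (PauliInf D q)} (L : ℕ) {w : PauliInf D q}
    (hw : w ∈ Submodule.span (ZMod 2) {w | ∃ g ∈ G, ∃ u : Site D, w = T D q u g}) :
    fold D q L w ∈ Submodule.span (ZMod 2)
      {w | ∃ g ∈ G, ∃ u : TorSite D L, w = foldedGen D q L g u} := by
  rw [← foldLin_apply]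
  refine Submodule.span_mono ?_ (Submodule.apply_mem_span_image_of_mem_span _ hw)
  rintro - ⟨-, ⟨g, hg, u, rfl⟩, rfl⟩
  exact ⟨g, hg, π D L u, by rw [foldLin_apply, fold_T]⟩

end Folding

section Shift

variable {D q L : ℕ}

def shiftTor (c : TorSite D L) : PauliTor D q L →ₗ[ZMod 2] PauliTor D q L :=
  LinearMap.funLeft (ZMod 2) (V q) (· + c)

lemma shiftTor_apply (c : TorSite D L) (w : PauliTor D q L) (t : TorSite D L) :
    shiftTor c w t = w (t + c) := rfl

lemma shiftTor_neg_shiftTor (c : TorSite D L) (w : PauliTor D q L) :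
    shiftTor (-c) (shiftTor c w) = w := by
  ext t : 1; simp [shiftTor_apply]

lemma shiftTor_foldedGen (a : TorSite D L) (g : PauliInf D q) (u : TorSite D L) :
    shiftTor a (foldedGen D q L g u) = foldedGen D q L g (u - a) := by
  ext t : 1; simp only [shiftTor_apply, foldedGen]; congr 1; abel

lemma pairTor_shiftTor [NeZero L] (c : TorSite D L) (v w : PauliTor D q L) :
    pairTor D q L (shiftTor c v) (shiftTor c w) = pairTor D q L v w :=
  Equiv.sum_comp (Equiv.addRight c) fun t => localPair q (v t) (w t)

lemma shiftTor_mem_span_foldedGen {G : Set (PauliInf D q)} (a : TorSite D L)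
    {w : PauliTor D q L}
    (hw : w ∈ Submodule.span (ZMod 2) {w | ∃ g ∈ G, ∃ u : TorSite D L, w = foldedGen D q L g u}) :
    shiftTor a w ∈ Submodule.span (ZMod 2)
      {w | ∃ g ∈ G, ∃ u : TorSite D L, w = foldedGen D q L g u} := by
  refine Submodule.span_mono ?_ (Submodule.apply_mem_span_image_of_mem_span _ hw)
  rintro - ⟨-, ⟨g, hg, u, rfl⟩, rfl⟩
  exact ⟨g, hg, u - a, shiftTor_foldedGen a g u⟩

end Shift

section Window

variable {L : ℕ} [NeZero L]

lemma nonneg_of_val_intCast_add_lt {a : ℤ} {k : ℕ} (ha : -(k : ℤ) ≤ a)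
    (hval : (a : ZMod L).val + k < L) : 0 ≤ a := by
  by_contra! hneg
  have hwrap : ((a : ZMod L).val : ℤ) = a + L := by
    rw [ZMod.val_intCast, Int.emod_eq_add_self_emod, Int.emod_eq_of_lt (by omega) (by omega)]
  omega

lemma exists_forall_add_ne_of_card_mul_lt (S : Finset (ZMod L)) (k : ℕ) (h : S.card * k < L) :
    ∃ c, ∀ s ∈ S, ∀ j ∈ Finset.Icc 1 k, s + (j : ZMod L) ≠ c := by
  classical
  set B := S.biUnion fun s => (Finset.Icc 1 k).image fun j : ℕ => s + (j : ZMod L)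
  have hB : B.card < (Finset.univ : Finset (ZMod L)).card := by
    refine lt_of_le_of_lt (Finset.card_biUnion_le_card_mul _ _ k fun s _ => ?_) ?_
    · exact Finset.card_image_le.trans (by simp)
    · simpa [ZMod.card] using h
  obtain ⟨c, -, hc⟩ := Finset.exists_mem_notMem_of_card_lt_card hB
  exact ⟨c, fun s hs j hj hsj =>
    hc (Finset.mem_biUnion.2 ⟨s, hs, Finset.mem_image.2 ⟨j, hj, hsj⟩⟩)⟩

lemma val_sub_add_lt_of_forall_add_ne {x c : ZMod L} {k : ℕ}
    (h : ∀ j ∈ Finset.Icc 1 k, x + (j : ZMod L) ≠ c) : (x - c).val + k < L := by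
  by_contra! hle
  have hlt := ZMod.val_lt (x - c)
  refine h (L - (x - c).val) (Finset.mem_Icc.2 ⟨by omega, by omega⟩) ?_
  rw [Nat.cast_sub hlt.le, ZMod.natCast_self, ZMod.natCast_zmod_val]
  ring

lemma exists_shiftTor_supp_val_add_lt {D q : ℕ} (O : PauliTor D q L) (k : ℕ)
    (h : Set.ncard {t | O t ≠ 0} * k < L) :
    ∃ c, ∀ t, shiftTor c O t ≠ 0 → ∀ i, (t i).val + k < L := by
  classical
  set S := Finset.univ.filter fun t => O t ≠ 0
  have hS : S.card * k < L := by
    rw [← Set.ncard_coe_finset]; simpa [S] using h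
  have hgap (i : Fin D) : ∃ c, ∀ x ∈ S.image (· i), ∀ j ∈ Finset.Icc 1 k, x + (j : ZMod L) ≠ c :=
    exists_forall_add_ne_of_card_mul_lt _ k
      ((Nat.mul_le_mul_right k Finset.card_image_le).trans_lt hS)
  choose c hc using hgap
  refine ⟨c, fun t ht i => ?_⟩
  simpa using val_sub_add_lt_of_forall_add_ne
    (hc i _ (Finset.mem_image_of_mem _ (Finset.mem_filter.2 ⟨Finset.mem_univ _, ht⟩)))

end Window

section Lift

variable {D q L : ℕ} [NeZero L]

def rep (t : TorSite D L) : Site D := fun i => ((t i).val : ℤ)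

lemma π_rep (t : TorSite D L) : π D L (rep t) = t := by
  ext i; simp [π, rep]

lemma rep_injective : Function.Injective (rep : TorSite D L → Site D) :=
  Function.LeftInverse.injective π_rep

lemma rep_π_of_mem_box {s : Site D} (hs : ∀ i, 0 ≤ s i ∧ s i < L) : rep (π D L s) = s := by
  ext i
  simp only [rep, π]
  rw [ZMod.val_intCast, Int.emod_eq_of_lt (hs i).1 (hs i).2]

/-- The copy of `O` on the fundamental box `{0,…,L-1}ᴰ`, extended by zero. -/
noncomputable def liftTor (O : PauliTor D q L) : PauliInf D q :=
  (Finsupp.equivFunOnFinite.symm O).mapDomain rep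

lemma liftTor_apply (O : PauliTor D q L) (s : Site D) :
    liftTor O s = if s = rep (π D L s) then O (π D L s) else 0 := by
  split_ifs with hs
  · conv_lhs => rw [hs]
    exact Finsupp.mapDomain_apply rep_injective _ _
  · refine Finsupp.mapDomain_of_notMem_range _ _ ?_
    rintro ⟨t, rfl⟩
    exact hs (by rw [π_rep])

lemma fold_liftTor (O : PauliTor D q L) : fold D q L (liftTor O) = O := by
  rw [fold_eq_mapDomain, liftTor, ← Finsupp.mapDomain_comp,
    show π D L ∘ rep = id from funext π_rep, Finsupp.mapDomain_id]
  rfl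

lemma pairTor_fold_right (O : PauliTor D q L) (h : PauliInf D q) :
    pairTor D q L O (fold D q L h) = ∑ s ∈ h.support, localPair q (O (π D L s)) (h s) := by
  classical
  simp only [pairTor_eq_sum, fold, Finsupp.sum, map_sum, apply_ite, map_zero]
  rw [Finset.sum_comm]
  simp

lemma pairInf_liftTor_eq_pairTor_fold (O : PauliTor D q L) (h : PauliInf D q)
    (hO : ∀ s, h s ≠ 0 → O (π D L s) ≠ 0 → s = rep (π D L s)) :
    pairInf D q (liftTor O) h = pairTor D q L O (fold D q L h) := by
  rw [pairInf_eq_sum_support_right, pairTor_fold_right]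
  refine Finset.sum_congr rfl fun s hs => ?_
  rw [liftTor_apply]
  split_ifs with hrep
  · rfl
  · have : O (π D L s) = 0 := by
      by_contra hne
      exact hrep (hO s (Finsupp.mem_support_iff.mp hs) hne)
    simp [this]

lemma pairInf_liftTor_T_eq_zero (k : ℕ) {O : PauliTor D q L}
    (hO : ∀ t, O t ≠ 0 → ∀ i, (t i).val + k < L) {g : PauliInf D q}
    (hg : ∀ s, g s ≠ 0 → ∀ i, 0 ≤ s i ∧ s i ≤ k) {u : Site D}
    (hlog : pairTor D q L O (foldedGen D q L g (π D L u)) = 0) :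
    pairInf D q (liftTor O) (T D q u g) = 0 := by
  by_cases hmeet : ∃ s₀, liftTor O s₀ ≠ 0 ∧ T D q u g s₀ ≠ 0
  swap
  · exact pairInf_eq_zero_of_disjoint fun s₀ hs₀ => not_not.mp fun h => hmeet ⟨s₀, hs₀, h⟩
  obtain ⟨s₀, hs₀O, hs₀g⟩ := hmeet
  rw [liftTor_apply, ite_ne_right_iff] at hs₀O
  obtain ⟨hs₀rep, hs₀O⟩ := hs₀O
  rw [pairInf_liftTor_eq_pairTor_fold, fold_T, hlog]
  intro s hs hOs
  refine (rep_π_of_mem_box fun i => ?_).symm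
  rw [T_apply] at hs hs₀g
  have h₀ := hg _ hs₀g i
  have h := hg _ hs i
  have hs₀i : s₀ i = ((π D L s₀ i).val : ℤ) := congrFun hs₀rep i
  have hw₀ := hO _ hs₀O i
  have hw : (s i : ZMod L).val + k < L := hO _ hOs i
  simp only [Pi.sub_apply] at h₀ h
  exact ⟨nonneg_of_val_intCast_add_lt (by omega) hw, by omega⟩


end Lift

end FiniteLogical

theorem finite_nontrivial_logical_of_small_torus_distance_general
    (D q r : ℕ)
    (G : Finset (PauliInf D q))
    (hsupp : ∀ g ∈ G, ∀ s : Site D, g s ≠ 0 → ∀ i : Fin D, 0 ≤ s i ∧ s i < (r : ℤ))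
    (L₀ : ℕ) [NeZero L₀]
    (O : PauliTor D q L₀)
    (hOlog : ∀ g ∈ G, ∀ u : TorSite D L₀, pairTor D q L₀ O (foldedGen D q L₀ g u) = 0)
    (hOnontriv : O ∉ Submodule.span (ZMod 2)
      {w : PauliTor D q L₀ | ∃ g ∈ G, ∃ u : TorSite D L₀, w = foldedGen D q L₀ g u})
    (hOsmall : Set.ncard {t : TorSite D L₀ | O t ≠ 0} * (r - 1) < L₀) :
    ∃ O' : PauliInf D q,
      (∀ g ∈ G, ∀ u : Site D, pairInf D q O' (T D q u g) = 0) ∧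
      O' ∉ Submodule.span (ZMod 2)
        {w : PauliInf D q | ∃ g ∈ G, ∃ u : Site D, w = T D q u g} := by
  obtain ⟨c, hwindow⟩ := exists_shiftTor_supp_val_add_lt O (r - 1) hOsmall
  have hcube : ∀ g ∈ G, ∀ s, g s ≠ 0 → ∀ i, 0 ≤ s i ∧ s i ≤ (r - 1 : ℕ) :=
    fun g hg s hs i => by have := hsupp g hg s hs i; omega
  have hlog : ∀ g ∈ G, ∀ u, pairTor D q L₀ (shiftTor c O) (foldedGen D q L₀ g u) = 0 := by
    intro g hg u
    rw [← add_sub_cancel_right u c, ← shiftTor_foldedGen, pairTor_shiftTor]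
    exact hOlog g hg _
  refine ⟨liftTor (shiftTor c O),
    fun g hg u => pairInf_liftTor_T_eq_zero (r - 1) hwindow (hcube g hg) (hlog g hg _),
    fun hmem => hOnontriv ?_⟩
  have hfold := fold_mem_span_foldedGen L₀ hmem
  rw [fold_liftTor] at hfold
  have hO := shiftTor_mem_span_foldedGen (-c) hfold
  rwa [shiftTor_neg_shiftTor] at hO

/-- If a translation-invariant local stabilizer code on `ℤᴰ` (generators `G`, each
supported in the cube `{0,…,r−1}ᴰ`, with all translates pairwise commuting) has, on
some torus `(ZMod L₀)ᴰ`, a logical operator `O` that is not spanned by the folded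
generators and satisfies `|supp(O)|·(r−1) < L₀`, then on the infinite lattice there is
a finite logical operator that is not a finite combination of the translated
generators. -/
theorem finite_nontrivial_logical_of_small_torus_distance
    (D q r : ℕ) (hD : 1 ≤ D) (hq : 1 ≤ q) (hr : 2 ≤ r)
    (G : Finset (PauliInf D q))
    (hsupp : ∀ g ∈ G, ∀ s : Site D, g s ≠ 0 → ∀ i : Fin D, 0 ≤ s i ∧ s i < (r : ℤ))
    (hcomm : ∀ g ∈ G, ∀ h ∈ G, ∀ u v : Site D, pairInf D q (T D q u g) (T D q v h) = 0)
    (L₀ : ℕ) [NeZero L₀] (hL₀ : 1 ≤ L₀)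
    (O : PauliTor D q L₀)
    (hOlog : ∀ g ∈ G, ∀ u : TorSite D L₀, pairTor D q L₀ O (foldedGen D q L₀ g u) = 0)
    (hOnontriv : O ∉ Submodule.span (ZMod 2)
      {w : PauliTor D q L₀ | ∃ g ∈ G, ∃ u : TorSite D L₀, w = foldedGen D q L₀ g u})
    (hOsmall : Set.ncard {t : TorSite D L₀ | O t ≠ 0} * (r - 1) < L₀) :
    ∃ O' : PauliInf D q,
      (∀ g ∈ G, ∀ u : Site D, pairInf D q O' (T D q u g) = 0) ∧
      O' ∉ Submodule.span (ZMod 2)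
        {w : PauliInf D q | ∃ g ∈ G, ∃ u : Site D, w = T D q u g} :=
  finite_nontrivial_logical_of_small_torus_distance_general D q r G hsupp L₀ O hOlog hOnontriv
    hOsmall
end

section
/- Fix an integer L ≥ 2 and consider Cubic Code 1 on the torus (ZMod L)³. Every nontrivial logical operator of Code 1 has support of size at least L. -/
namespace CubicCode1Torus

/-- Sites of the discrete torus `(ZMod L)³`. -/
abbrev Site (L : ℕ) := ZMod L × ZMod L × ZMod L

/-- A CSS Pauli operator (mod phase): a pair `(vX, vZ)` of functions `Site L → F₂ × F₂`
(two qubits per site). -/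
abbrev Pauli (L : ℕ) := (Site L → ZMod 2 × ZMod 2) × (Site L → ZMod 2 × ZMod 2)

/-- The commutation pairing `⟨v,w⟩ = Σ_s (vX(s)·wZ(s) + vZ(s)·wX(s))`. -/
def pairing (L : ℕ) [NeZero L] (v w : Pauli L) : ZMod 2 :=
  ∑ s : Site L,
    ((v.1 s).1 * (w.2 s).1 + (v.1 s).2 * (w.2 s).2 +
     (v.2 s).1 * (w.1 s).1 + (v.2 s).2 * (w.1 s).2)

/-- The Z-corner table of Cubic Code 1. -/
def z : Bool × Bool × Bool → ZMod 2 × ZMod 2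
  | (false, false, false) => (1, 0)
  | (true,  false, false) => (0, 1)
  | (false, true,  false) => (1, 1)
  | (true,  true,  false) => (1, 0)
  | (false, false, true)  => (0, 1)
  | (true,  false, true)  => (0, 0)
  | (false, true,  true)  => (1, 0)
  | (true,  true,  true)  => (0, 1)

/-- Embedding of a corner coordinate `{0,1}` into `ZMod L`. -/
def emb (L : ℕ) (b : Bool) : ZMod L := if b then 1 else 0

/-- The site `p + c` for a corner `c ∈ {0,1}³`. -/
def cellSite (L : ℕ) (p : Site L) (c : Bool × Bool × Bool) : Site L :=
  (p.1 + emb L c.1, p.2.1 + emb L c.2.1, p.2.2 + emb L c.2.2)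

/-- `ζ_p`: the Z-part of the Z-type generator at `p`. -/
def zeta (L : ℕ) [NeZero L] (p : Site L) : Site L → ZMod 2 × ZMod 2 :=
  fun s => ∑ c : Bool × Bool × Bool, if s = cellSite L p c then z c else 0

/-- `ξ_p`: the X-part of the X-type generator at `p`, `ξ_p(p+c) = σ(z((1,1,1)−c))`. -/
def xi (L : ℕ) [NeZero L] (p : Site L) : Site L → ZMod 2 × ZMod 2 :=
  fun s => ∑ c : Bool × Bool × Bool,
    if s = cellSite L p c then
      ((z (!c.1, !c.2.1, !c.2.2)).2, (z (!c.1, !c.2.1, !c.2.2)).1) else 0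

/-- The Z-type generator `g_p = (0, ζ_p)`. -/
def gZ (L : ℕ) [NeZero L] (p : Site L) : Pauli L := (0, zeta L p)

/-- The X-type generator `f_p = (ξ_p, 0)`. -/
def fX (L : ℕ) [NeZero L] (p : Site L) : Pauli L := (xi L p, 0)

/-- The stabilizer subspace: the `F₂`-span of all generators. -/
def stab (L : ℕ) [NeZero L] : Submodule (ZMod 2) (Pauli L) :=
  Submodule.span (ZMod 2) {v : Pauli L | ∃ p : Site L, v = gZ L p ∨ v = fX L p}

/-- The support of a Pauli operator. -/
def support (L : ℕ) (v : Pauli L) : Set (Site L) := {s | v.1 s ≠ 0 ∨ v.2 s ≠ 0}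

end CubicCode1Torus

/-!
If `v` is supported on fewer than `L` sites, each coordinate misses some value on the support, so
after a translation `v` vanishes on the three coordinate planes through the origin. Encode a
component `u : Λ → 𝔽₂` as the polynomial `lift u ∈ 𝔽₂[x, y, z]` with exponents in `[0, L)`. As `u`
vanishes wherever a coordinate is `0 ≡ L`, every coefficient of `lift u` times a corner polynomial
is either zero or a cube sum of `u` on the torus: nothing wraps around. Commutation of the `Z`-part
`(u₁, u₂)` of `v` with every `f_p` thus becomes `u₁ * B = u₂ * A`, where `A`, `B` are the corner
polynomials of the two components of `ζ`, and symmetrically for the `X`-part. Both pairs of corner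
polynomials are coprime (they are linear in `x`, with nonzero resultant and coprime contents), so
`(u₁, u₂) = T * (A, B)`: each half of `v` is a sum of translated generators.
-/

section
open Polynomial

theorem Polynomial.isRelPrime_C_add_X_mul_C {R : Type*} [CommRing R] [IsDomain R]
    {a₀ a₁ b₀ b₁ : R} (hres : a₀ * b₁ - a₁ * b₀ ≠ 0)
    (hcontent : ∀ d, d ∣ a₀ → d ∣ a₁ → d ∣ b₀ → d ∣ b₁ → IsUnit d) :
    IsRelPrime (C a₀ + X * C a₁) (C b₀ + X * C b₁) := by
  intro D hA hB
  have hres_dvd : D ∣ C (a₀ * b₁ - a₁ * b₀) := by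
    have : C (a₀ * b₁ - a₁ * b₀) = C b₁ * (C a₀ + X * C a₁) - C a₁ * (C b₀ + X * C b₁) := by
      simp only [map_sub, map_mul]; ring
    rw [this]
    exact dvd_sub (dvd_mul_of_dvd_right hA _) (dvd_mul_of_dvd_right hB _)
  have hD : D = C (D.coeff 0) :=
    eq_C_of_degree_le_zero ((degree_le_of_dvd hres_dvd (C_ne_zero.2 hres)).trans degree_C_le)
  rw [hD, C_dvd_iff_dvd_coeff] at hA hB
  rw [hD, isUnit_C]
  exact hcontent _ (by simpa using hA 0) (by simpa using hA 1) (by simpa using hB 0)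
    (by simpa using hB 1)

end

theorem exists_eq_mul_of_mul_eq_mul {R : Type*} [CommRing R] [IsDomain R] [DecompositionMonoid R]
    {a b p q : R} (h : a * q = b * p) (hpq : IsRelPrime p q) (hp : p ≠ 0) :
    ∃ t, a = t * p ∧ b = t * q := by
  obtain ⟨t, rfl⟩ := hpq.dvd_of_dvd_mul_right ⟨b, by rw [h, mul_comm]⟩
  exact ⟨t, mul_comm p t, mul_left_cancel₀ hp (by rw [mul_comm p b, ← h]; ring)⟩

lemma exists_forall_ne_of_ncard_lt {α β : Type*} [Finite β] {S : Set α} (hS : S.Finite)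
    (f : α → β) (h : S.ncard < Nat.card β) : ∃ b, ∀ a ∈ S, f a ≠ b := by
  obtain ⟨b, -, hb⟩ := Set.exists_mem_notMem_of_ncard_lt_ncard (s := f '' S) (t := Set.univ)
    (by rw [Set.ncard_univ]; exact (Set.ncard_image_le hS).trans_lt h) (hS.image f)
  exact ⟨b, fun a ha hab => hb ⟨a, ha, hab⟩⟩

namespace CubicCode1Torus

open MvPolynomial

abbrev Corner := Bool × Bool × Bool

def opposite (c : Corner) : Corner := (!c.1, !c.2.1, !c.2.2)

@[simp] lemma opposite_opposite (c : Corner) : opposite (opposite c) = c := by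
  simp [opposite]

def oppositeEquiv : Equiv.Perm Corner :=
  Function.Involutive.toPerm opposite opposite_opposite

def dual {M : Type*} (τ : Corner → M × M) : Corner → M × M := fun c => (τ (opposite c)).swap

@[simp] lemma dual_dual {M : Type*} (τ : Corner → M × M) : dual (dual τ) = τ := by
  funext c; simp [dual]

section Encoding

variable {L : ℕ}

noncomputable def cornerExp (c : Corner) : Fin 3 →₀ ℕ :=
  Finsupp.single 0 c.1.toNat + Finsupp.single 1 c.2.1.toNat + Finsupp.single 2 c.2.2.toNat

noncomputable def toExp (s : Site L) : Fin 3 →₀ ℕ :=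
  Finsupp.single 0 s.1.val + Finsupp.single 1 s.2.1.val + Finsupp.single 2 s.2.2.val

def toSite (L : ℕ) (e : Fin 3 →₀ ℕ) : Site L := ((e 0 : ZMod L), (e 1 : ZMod L), (e 2 : ZMod L))

lemma emb_eq_toNat (b : Bool) : emb L b = b.toNat := by
  cases b <;> simp [emb]

lemma cornerExp_le_one (c : Corner) (i : Fin 3) : cornerExp c i ≤ 1 := by
  fin_cases i <;> simp [cornerExp, Bool.toNat_le]

lemma cornerExp_add_cornerExp_opposite (c : Corner) :
    cornerExp c + cornerExp (opposite c) = cornerExp (true, true, true) := by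
  obtain ⟨a, b, c⟩ := c
  ext i; fin_cases i <;> cases a <;> cases b <;> cases c <;> simp [cornerExp, opposite]

lemma toSite_add_cornerExp (e : Fin 3 →₀ ℕ) (c : Corner) :
    toSite L (e + cornerExp c) = cellSite L (toSite L e) c := by
  simp [toSite, cellSite, cornerExp, emb_eq_toNat]

lemma toExp_toSite {e : Fin 3 →₀ ℕ} (he : ∀ i, e i < L) : toExp (toSite L e) = e := by
  ext i; fin_cases i <;> simp [toSite, toExp, Nat.mod_eq_of_lt (he _)]

lemma toSite_onCoordPlane (e : Fin 3 →₀ ℕ) (i : Fin 3) (h : (e i : ZMod L) = 0) :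
    (toSite L e).1 = 0 ∨ (toSite L e).2.1 = 0 ∨ (toSite L e).2.2 = 0 := by
  fin_cases i <;> simp_all [toSite]

variable [NeZero L]

lemma toSite_toExp (s : Site L) : toSite L (toExp s) = s := by
  simp [toSite, toExp]

lemma toExp_lt (s : Site L) (i : Fin 3) : toExp s i < L := by
  fin_cases i <;> simp [toExp, ZMod.val_lt]

end Encoding

section Polynomials

variable {L : ℕ} {R : Type*} [CommRing R]

def VanishesOnCoordPlanes {M : Type*} [Zero M] (u : Site L → M) : Prop :=
  ∀ s : Site L, (s.1 = 0 ∨ s.2.1 = 0 ∨ s.2.2 = 0) → u s = 0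

noncomputable def cornerPoly (t : Corner → R) : MvPolynomial (Fin 3) R :=
  ∑ c, monomial (cornerExp c) (t c)

lemma coeff_mul_cornerPoly (Q : MvPolynomial (Fin 3) R) (t : Corner → R) (d : Fin 3 →₀ ℕ) :
    coeff d (Q * cornerPoly t) =
      ∑ c, if cornerExp c ≤ d then coeff (d - cornerExp c) Q * t c else 0 := by
  simp only [cornerPoly, Finset.mul_sum, coeff_sum, coeff_mul_monomial']

variable [NeZero L] {u : Site L → R}

noncomputable def lift (u : Site L → R) : MvPolynomial (Fin 3) R :=
  ∑ s, monomial (toExp s) (u s)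

lemma coeff_lift (u : Site L → R) (e : Fin 3 →₀ ℕ) :
    coeff e (lift u) = if ∀ i, e i < L then u (toSite L e) else 0 := by
  classical
  simp only [lift, coeff_sum, coeff_monomial]
  split_ifs with he
  · refine (Finset.sum_eq_single (toSite L e) (fun s _ hs => if_neg fun h => hs ?_)
      (by simp)).trans (if_pos (toExp_toSite he))
    rw [← h, toSite_toExp]
  · exact Finset.sum_eq_zero fun s _ => if_neg fun (h : toExp s = e) => he (h ▸ toExp_lt s)

lemma coeff_lift_eq_zero (hu : VanishesOnCoordPlanes u) {e : Fin 3 →₀ ℕ} {i : Fin 3}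
    (hi : e i = 0 ∨ L ≤ e i) : coeff e (lift u) = 0 := by
  rw [coeff_lift]
  split_ifs with he
  · refine hu _ (toSite_onCoordPlane e i ?_)
    rw [hi.resolve_right (not_le.2 (he i)), Nat.cast_zero]
  · rfl

lemma coeff_lift_of_le (hu : VanishesOnCoordPlanes u) {e : Fin 3 →₀ ℕ} (he : ∀ i, e i ≤ L) :
    coeff e (lift u) = u (toSite L e) := by
  rw [coeff_lift]
  split_ifs with hlt
  · rfl
  · push Not at hlt
    obtain ⟨i, hi⟩ := hlt
    refine (hu _ (toSite_onCoordPlane e i ?_)).symm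
    rw [le_antisymm (he i) hi, ZMod.natCast_self]

lemma coeff_lift_mul_cornerPoly_eq_zero (hu : VanishesOnCoordPlanes u) {d : Fin 3 →₀ ℕ}
    {i : Fin 3} (hi : d i = 0 ∨ L < d i) (t : Corner → R) :
    coeff d (lift u * cornerPoly t) = 0 := by
  rw [coeff_mul_cornerPoly]
  refine Finset.sum_eq_zero fun c _ => ?_
  split_ifs
  · rw [coeff_lift_eq_zero hu (i := i), zero_mul]
    have := cornerExp_le_one c i
    rw [Finsupp.tsub_apply]
    omega
  · rfl

lemma coeff_add_cornerExp_lift_mul_cornerPoly (hu : VanishesOnCoordPlanes u)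
    {e : Fin 3 →₀ ℕ} (he : ∀ i, e i < L) (t : Corner → R) :
    coeff (e + cornerExp (true, true, true)) (lift u * cornerPoly (t ∘ opposite)) =
      ∑ c, u (cellSite L (toSite L e) c) * t c := by
  have hsub (c : Corner) : e + cornerExp (true, true, true) - cornerExp c =
      e + cornerExp (opposite c) := by
    rw [← cornerExp_add_cornerExp_opposite c, add_left_comm, add_tsub_cancel_left]
  have hle (c : Corner) : cornerExp c ≤ e + cornerExp (true, true, true) := by
    rw [← cornerExp_add_cornerExp_opposite c]
    exact le_add_left le_self_add
  rw [coeff_mul_cornerPoly]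
  simp only [hle, if_true, hsub, Function.comp_apply]
  refine (Equiv.sum_comp oppositeEquiv (fun c => coeff (e + cornerExp c) (lift u) * t c)).trans
    (Finset.sum_congr rfl fun c _ => ?_)
  rw [coeff_lift_of_le hu fun i => by have := he i; have := cornerExp_le_one c i; simp; omega,
    toSite_add_cornerExp]

theorem lift_mul_cornerPoly_add_lift_mul_cornerPoly_eq_zero {u₁ u₂ : Site L → R}
    (hu₁ : VanishesOnCoordPlanes u₁) (hu₂ : VanishesOnCoordPlanes u₂) {t₁ t₂ : Corner → R}
    (h : ∀ p, ∑ c, (u₁ (cellSite L p c) * t₁ c + u₂ (cellSite L p c) * t₂ c) = 0) :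
    lift u₁ * cornerPoly (t₁ ∘ opposite) + lift u₂ * cornerPoly (t₂ ∘ opposite) = 0 := by
  ext d
  rw [coeff_add, coeff_zero]
  by_cases hd : ∃ i, d i = 0 ∨ L < d i
  · obtain ⟨i, hi⟩ := hd
    rw [coeff_lift_mul_cornerPoly_eq_zero hu₁ hi, coeff_lift_mul_cornerPoly_eq_zero hu₂ hi,
      add_zero]
  · push Not at hd
    have hone (i : Fin 3) : cornerExp (true, true, true) i = 1 := by
      fin_cases i <;> simp [cornerExp]
    obtain ⟨e, rfl⟩ : ∃ e, d = e + cornerExp (true, true, true) :=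
      ⟨d - cornerExp (true, true, true), (tsub_add_cancel_of_le fun i => by
        have := (hd i).1; rw [hone]; omega).symm⟩
    have he (i : Fin 3) : e i < L := by
      have := (hd i).2; rw [Finsupp.add_apply, hone] at this; omega
    rw [coeff_add_cornerExp_lift_mul_cornerPoly hu₁ he,
      coeff_add_cornerExp_lift_mul_cornerPoly hu₂ he, ← Finset.sum_add_distrib, h]

end Polynomials

section Coprimality

lemma monomial_cornerExp {R : Type*} [CommSemiring R] (c : Corner) (r : R) :
    monomial (cornerExp c) r = C r * X 0 ^ c.1.toNat * X 1 ^ c.2.1.toNat * X 2 ^ c.2.2.toNat := by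
  rw [cornerExp, monomial_add_single, monomial_add_single, ← add_zero (Finsupp.single 0 _),
    monomial_single_add, monomial_zero']
  ring

lemma finSuccEquiv_X_one {R : Type*} [CommSemiring R] :
    finSuccEquiv R 2 (X 1) = Polynomial.C (X 0) := by
  rw [show (1 : Fin 3) = Fin.succ 0 from rfl, finSuccEquiv_X_succ]

lemma finSuccEquiv_X_two {R : Type*} [CommSemiring R] :
    finSuccEquiv R 2 (X 2) = Polynomial.C (X 1) := by
  rw [show (2 : Fin 3) = Fin.succ 1 from rfl, finSuccEquiv_X_succ]

lemma cornerPoly_eq {R : Type*} [CommRing R] (t : Corner → R) :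
    cornerPoly t = C (t (false, false, false)) + C (t (true, false, false)) * X 0 +
      C (t (false, true, false)) * X 1 + C (t (true, true, false)) * X 0 * X 1 +
      C (t (false, false, true)) * X 2 + C (t (true, false, true)) * X 0 * X 2 +
      C (t (false, true, true)) * X 1 * X 2 + C (t (true, true, true)) * X 0 * X 1 * X 2 := by
  simp only [cornerPoly, Fintype.sum_prod_type, Fintype.sum_bool, monomial_cornerExp,
    Bool.toNat_true, Bool.toNat_false, pow_one, pow_zero, mul_one]
  ring

lemma cornerPoly_z_fst : cornerPoly (Prod.fst ∘ z) = 1 + X 1 + X 0 * X 1 + X 1 * X 2 := by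
  simp [cornerPoly_eq, z]

lemma cornerPoly_z_snd : cornerPoly (Prod.snd ∘ z) = X 0 + X 1 + X 2 + X 0 * X 1 * X 2 := by
  simp [cornerPoly_eq, z]

lemma cornerPoly_dual_z_fst :
    cornerPoly (Prod.fst ∘ dual z) = 1 + X 0 * X 1 + X 0 * X 2 + X 1 * X 2 := by
  simp [cornerPoly_eq, z, dual, opposite]

lemma cornerPoly_dual_z_snd :
    cornerPoly (Prod.snd ∘ dual z) = X 0 + X 2 + X 0 * X 2 + X 0 * X 1 * X 2 := by
  simp [cornerPoly_eq, z, dual, opposite]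

lemma finSuccEquiv_cornerPoly_z_fst :
    finSuccEquiv (ZMod 2) 2 (cornerPoly (Prod.fst ∘ z)) =
      Polynomial.C (1 + X 0 + X 0 * X 1) + Polynomial.X * Polynomial.C (X 0) := by
  rw [cornerPoly_z_fst]
  simp only [map_add, map_mul, map_one, finSuccEquiv_X_zero, finSuccEquiv_X_one,
    finSuccEquiv_X_two]
  ring

lemma finSuccEquiv_cornerPoly_z_snd :
    finSuccEquiv (ZMod 2) 2 (cornerPoly (Prod.snd ∘ z)) =
      Polynomial.C (X 0 + X 1) + Polynomial.X * Polynomial.C (1 + X 0 * X 1) := by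
  rw [cornerPoly_z_snd]
  simp only [map_add, map_mul, map_one, finSuccEquiv_X_zero, finSuccEquiv_X_one,
    finSuccEquiv_X_two]
  ring

lemma finSuccEquiv_cornerPoly_dual_z_fst :
    finSuccEquiv (ZMod 2) 2 (cornerPoly (Prod.fst ∘ dual z)) =
      Polynomial.C (1 + X 0 * X 1) + Polynomial.X * Polynomial.C (X 0 + X 1) := by
  rw [cornerPoly_dual_z_fst]
  simp only [map_add, map_mul, map_one, finSuccEquiv_X_zero, finSuccEquiv_X_one,
    finSuccEquiv_X_two]
  ring

lemma finSuccEquiv_cornerPoly_dual_z_snd :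
    finSuccEquiv (ZMod 2) 2 (cornerPoly (Prod.snd ∘ dual z)) =
      Polynomial.C (X 1) + Polynomial.X * Polynomial.C (1 + X 1 + X 0 * X 1) := by
  rw [cornerPoly_dual_z_snd]
  simp only [map_add, map_mul, map_one, finSuccEquiv_X_zero, finSuccEquiv_X_one,
    finSuccEquiv_X_two]
  ring

theorem isRelPrime_cornerPoly_z :
    IsRelPrime (cornerPoly (Prod.fst ∘ z)) (cornerPoly (Prod.snd ∘ z)) := by
  refine IsRelPrime.of_map (finSuccEquiv (ZMod 2) 2) ?_
  rw [finSuccEquiv_cornerPoly_z_fst, finSuccEquiv_cornerPoly_z_snd]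
  refine Polynomial.isRelPrime_C_add_X_mul_C (fun h => by simpa using congrArg (eval 0) h)
    fun d h₀ h₁ _ _ => isUnit_of_dvd_one ?_
  convert dvd_sub h₀ (dvd_mul_of_dvd_left h₁ (1 + X 1)) using 1
  ring

theorem isRelPrime_cornerPoly_dual_z :
    IsRelPrime (cornerPoly (Prod.fst ∘ dual z)) (cornerPoly (Prod.snd ∘ dual z)) := by
  refine IsRelPrime.of_map (finSuccEquiv (ZMod 2) 2) ?_
  rw [finSuccEquiv_cornerPoly_dual_z_fst, finSuccEquiv_cornerPoly_dual_z_snd]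
  refine Polynomial.isRelPrime_C_add_X_mul_C (fun h => by simpa using congrArg (eval 0) h)
    fun d h₀ _ h₁ _ => isUnit_of_dvd_one ?_
  convert dvd_sub h₀ (dvd_mul_of_dvd_right h₁ (X 0)) using 1
  ring

lemma cornerPoly_ne_zero {R : Type*} [CommRing R] {t : Corner → R}
    (h : t (false, false, false) ≠ 0) : cornerPoly t ≠ 0 := fun h' => h <| by
  simpa [cornerPoly_eq] using congrArg (eval 0) h'

end Coprimality

section Periodization

variable (L : ℕ) {R : Type*} [CommRing R]

noncomputable def periodize : MvPolynomial (Fin 3) R →ₗ[R] Site L → R :=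
  (basisMonomials (Fin 3) R).constr R fun e => (Pi.single (toSite L e) 1 : Site L → R)

def cubeFun {M : Type*} [AddCommMonoid M] (τ : Corner → M) (p : Site L) : Site L → M :=
  ∑ c, Pi.single (cellSite L p c) (τ c)

variable {L}

lemma periodize_monomial (e : Fin 3 →₀ ℕ) (r : R) :
    periodize L (monomial e r) = Pi.single (toSite L e) r := by
  have h := (basisMonomials (Fin 3) R).constr_basis R
    (fun e => (Pi.single (toSite L e) 1 : Site L → R)) e
  rw [coe_basisMonomials] at h
  rw [← mul_one r, ← smul_eq_mul, ← smul_monomial, map_smul, periodize, h, ← Pi.single_smul']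

lemma periodize_lift [NeZero L] (u : Site L → R) : periodize L (lift u) = u := by
  simp [lift, map_sum, periodize_monomial, toSite_toExp, Finset.univ_sum_single]

lemma periodize_monomial_mul_cornerPoly (e : Fin 3 →₀ ℕ) (r : R) (t : Corner → R) :
    periodize L (monomial e r * cornerPoly t) = r • cubeFun L t (toSite L e) := by
  simp [cornerPoly, Finset.mul_sum, monomial_mul, periodize_monomial, toSite_add_cornerExp,
    cubeFun, Finset.smul_sum, ← Pi.single_smul']

lemma cubeFun_apply_fst {τ : Corner → R × R} (p s : Site L) :
    (cubeFun L τ p s).1 = cubeFun L (Prod.fst ∘ τ) p s := by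
  simp [cubeFun, Pi.single_apply, Prod.fst_sum, apply_ite Prod.fst]

lemma cubeFun_apply_snd {τ : Corner → R × R} (p s : Site L) :
    (cubeFun L τ p s).2 = cubeFun L (Prod.snd ∘ τ) p s := by
  simp [cubeFun, Pi.single_apply, Prod.snd_sum, apply_ite Prod.snd]

theorem periodize_mul_cornerPoly_mem_span (τ : Corner → R × R) (T : MvPolynomial (Fin 3) R) :
    (fun s => (periodize L (T * cornerPoly (Prod.fst ∘ τ)) s,
        periodize L (T * cornerPoly (Prod.snd ∘ τ)) s))
      ∈ Submodule.span R (Set.range (cubeFun L τ)) := by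
  induction T using MvPolynomial.induction_on' with
  | monomial e r =>
    convert Submodule.smul_mem _ r (Submodule.subset_span (Set.mem_range_self (toSite L e))) using 1
    ext s <;> simp [periodize_monomial_mul_cornerPoly, cubeFun_apply_fst, cubeFun_apply_snd]
  | add T T' hT hT' =>
    convert add_mem hT hT' using 1
    ext s <;> simp [add_mul]

end Periodization

section Stabilizer

variable {L : ℕ} [NeZero L]

lemma sum_mul_cubeFun {R : Type*} [CommRing R] (w : Site L → R × R) (τ : Corner → R × R)
    (p : Site L) :
    ∑ s, ((w s).1 * (cubeFun L τ p s).1 + (w s).2 * (cubeFun L τ p s).2) =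
      ∑ c, ((w (cellSite L p c)).1 * (τ c).1 + (w (cellSite L p c)).2 * (τ c).2) := by
  simp only [cubeFun, Finset.sum_apply, Pi.single_apply, Prod.fst_sum, apply_ite Prod.fst,
    Prod.fst_zero, Finset.mul_sum, mul_ite, mul_zero, Prod.snd_sum, apply_ite Prod.snd,
    Prod.snd_zero, Finset.sum_add_distrib]
  congr 1 <;> rw [Finset.sum_comm] <;> simp

theorem mem_span_cubeFun {τ : Corner → ZMod 2 × ZMod 2}
    (hτ : IsRelPrime (cornerPoly (Prod.fst ∘ τ)) (cornerPoly (Prod.snd ∘ τ)))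
    (hτ₀ : cornerPoly (Prod.fst ∘ τ) ≠ 0) {w : Site L → ZMod 2 × ZMod 2}
    (hw : VanishesOnCoordPlanes w)
    (horth : ∀ p, ∑ s, ((w s).1 * (cubeFun L (dual τ) p s).1 +
      (w s).2 * (cubeFun L (dual τ) p s).2) = 0) :
    w ∈ Submodule.span (ZMod 2) (Set.range (cubeFun L τ)) := by
  have hw₁ : VanishesOnCoordPlanes (Prod.fst ∘ w) := fun s hs => by simp [hw s hs]
  have hw₂ : VanishesOnCoordPlanes (Prod.snd ∘ w) := fun s hs => by simp [hw s hs]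
  have hcorner (p : Site L) : ∑ c, ((Prod.fst ∘ w) (cellSite L p c) * (τ (opposite c)).2 +
      (Prod.snd ∘ w) (cellSite L p c) * (τ (opposite c)).1) = 0 := by
    simpa [sum_mul_cubeFun, dual] using horth p
  have hpoly := lift_mul_cornerPoly_add_lift_mul_cornerPoly_eq_zero hw₁ hw₂ hcorner
  have hopp (f : ZMod 2 × ZMod 2 → ZMod 2) : (fun c => f (τ (opposite c))) ∘ opposite = f ∘ τ := by
    funext c; simp
  rw [hopp Prod.snd, hopp Prod.fst, CharTwo.add_eq_zero] at hpoly
  obtain ⟨T, h₁, h₂⟩ := exists_eq_mul_of_mul_eq_mul hpoly hτ hτ₀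
  convert periodize_mul_cornerPoly_mem_span τ T using 1
  ext s
  · simp [← h₁, periodize_lift]
  · simp [← h₂, periodize_lift]

lemma zeta_eq_cubeFun (p : Site L) : zeta L p = cubeFun L z p := by
  funext s; simp [zeta, cubeFun, Pi.single_apply]

lemma xi_eq_cubeFun (p : Site L) : xi L p = cubeFun L (dual z) p := by
  funext s; simp [xi, cubeFun, Pi.single_apply, dual, opposite, Prod.swap]

lemma pairing_gZ (v : Pauli L) (p : Site L) :
    pairing L v (gZ L p) = ∑ s, ((v.1 s).1 * (zeta L p s).1 + (v.1 s).2 * (zeta L p s).2) := by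
  simp [pairing, gZ]

lemma pairing_fX (v : Pauli L) (p : Site L) :
    pairing L v (fX L p) = ∑ s, ((v.2 s).1 * (xi L p s).1 + (v.2 s).2 * (xi L p s).2) := by
  simp [pairing, fX]

lemma inr_mem_stab {w : Site L → ZMod 2 × ZMod 2}
    (hw : w ∈ Submodule.span (ZMod 2) (Set.range (zeta L))) : ((0, w) : Pauli L) ∈ stab L := by
  have : (Submodule.span (ZMod 2) (Set.range (zeta L))).map (LinearMap.inr (ZMod 2) _ _) ≤
      stab L := by
    rw [Submodule.map_span_le]
    rintro _ ⟨p, rfl⟩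
    exact Submodule.subset_span ⟨p, Or.inl rfl⟩
  exact this ⟨w, hw, rfl⟩

lemma inl_mem_stab {w : Site L → ZMod 2 × ZMod 2}
    (hw : w ∈ Submodule.span (ZMod 2) (Set.range (xi L))) : ((w, 0) : Pauli L) ∈ stab L := by
  have : (Submodule.span (ZMod 2) (Set.range (xi L))).map (LinearMap.inl (ZMod 2) _ _) ≤
      stab L := by
    rw [Submodule.map_span_le]
    rintro _ ⟨p, rfl⟩
    exact Submodule.subset_span ⟨p, Or.inr rfl⟩
  exact this ⟨w, hw, rfl⟩

def IsLogical (v : Pauli L) : Prop :=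
  ∀ p : Site L, pairing L v (gZ L p) = 0 ∧ pairing L v (fX L p) = 0

theorem mem_stab_of_isLogical {v : Pauli L} (hv : IsLogical v)
    (hv₁ : VanishesOnCoordPlanes v.1) (hv₂ : VanishesOnCoordPlanes v.2) : v ∈ stab L := by
  have hZ : ((0, v.2) : Pauli L) ∈ stab L := by
    refine inr_mem_stab ?_
    rw [show zeta L = cubeFun L z from funext zeta_eq_cubeFun]
    refine mem_span_cubeFun isRelPrime_cornerPoly_z (cornerPoly_ne_zero (by decide)) hv₂
      fun p => ?_
    rw [← xi_eq_cubeFun, ← pairing_fX]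
    exact (hv p).2
  have hX : ((v.1, 0) : Pauli L) ∈ stab L := by
    refine inl_mem_stab ?_
    rw [show xi L = cubeFun L (dual z) from funext xi_eq_cubeFun]
    refine mem_span_cubeFun isRelPrime_cornerPoly_dual_z (cornerPoly_ne_zero (by decide)) hv₁
      fun p => ?_
    rw [dual_dual, ← zeta_eq_cubeFun, ← pairing_gZ]
    exact (hv p).1
  simpa using add_mem hX hZ

end Stabilizer

section Translation

variable {L : ℕ}

def translate (o : Site L) : Pauli L →ₗ[ZMod 2] Pauli L :=
  (LinearMap.funLeft (ZMod 2) (ZMod 2 × ZMod 2) (· + o)).prodMap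
    (LinearMap.funLeft (ZMod 2) (ZMod 2 × ZMod 2) (· + o))

lemma translate_apply (o : Site L) (v : Pauli L) :
    translate o v = (fun s => v.1 (s + o), fun s => v.2 (s + o)) :=
  rfl

lemma translate_neg_translate (o : Site L) (v : Pauli L) : translate (-o) (translate o v) = v := by
  simp [translate_apply]

lemma cellSite_add (p o : Site L) (c : Corner) : cellSite L (p + o) c = cellSite L p c + o := by
  refine Prod.ext ?_ (Prod.ext ?_ ?_) <;> simp [cellSite] <;> ring

lemma cubeFun_apply_add {M : Type*} [AddCommMonoid M] (τ : Corner → M) (p o s : Site L) :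
    cubeFun L τ p (s + o) = cubeFun L τ (p - o) s := by
  simp only [cubeFun, Finset.sum_apply, Pi.single_apply]
  refine Finset.sum_congr rfl fun c _ => ?_
  have : cellSite L p c = cellSite L (p - o) c + o := by rw [← cellSite_add, sub_add_cancel]
  simp only [this, add_left_inj]

variable [NeZero L]

lemma translate_gZ (o p : Site L) : translate o (gZ L p) = gZ L (p - o) := by
  simp only [gZ, zeta_eq_cubeFun, translate_apply, Pi.zero_apply, cubeFun_apply_add]
  rfl

lemma translate_fX (o p : Site L) : translate o (fX L p) = fX L (p - o) := by
  simp only [fX, xi_eq_cubeFun, translate_apply, cubeFun_apply_add, Pi.zero_apply]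
  rfl

lemma translate_mem_stab (o : Site L) {v : Pauli L} (hv : v ∈ stab L) : translate o v ∈ stab L := by
  have : (stab L).map (translate o) ≤ stab L := by
    rw [stab, Submodule.map_span_le]
    rintro _ ⟨p, rfl | rfl⟩
    · rw [translate_gZ]; exact Submodule.subset_span ⟨p - o, Or.inl rfl⟩
    · rw [translate_fX]; exact Submodule.subset_span ⟨p - o, Or.inr rfl⟩
  exact this ⟨v, hv, rfl⟩

lemma pairing_translate (o : Site L) (v w : Pauli L) :
    pairing L (translate o v) w = pairing L v (translate (-o) w) :=
  Fintype.sum_equiv (Equiv.addRight o) _ _ fun s => by simp [translate_apply]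

lemma isLogical_translate {v : Pauli L} (hv : IsLogical v) (o : Site L) :
    IsLogical (translate o v) := fun p => by
  simpa [pairing_translate, translate_gZ, translate_fX] using hv (p + o)

theorem exists_translate_vanishesOnCoordPlanes {v : Pauli L} (hv : (support L v).ncard < L) :
    ∃ o, VanishesOnCoordPlanes (translate o v).1 ∧ VanishesOnCoordPlanes (translate o v).2 := by
  have hcard : (support L v).ncard < Nat.card (ZMod L) := by rwa [Nat.card_zmod]
  obtain ⟨a, ha⟩ := exists_forall_ne_of_ncard_lt (Set.toFinite _) (fun s => s.1) hcard
  obtain ⟨b, hb⟩ := exists_forall_ne_of_ncard_lt (Set.toFinite _) (fun s => s.2.1) hcard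
  obtain ⟨c, hc⟩ := exists_forall_ne_of_ncard_lt (Set.toFinite _) (fun s => s.2.2) hcard
  have hout (s : Site L) (hs : s.1 = 0 ∨ s.2.1 = 0 ∨ s.2.2 = 0) :
      s + (a, b, c) ∉ support L v := fun hmem => by
    rcases hs with hs | hs | hs
    · exact ha _ hmem (by simp [hs])
    · exact hb _ hmem (by simp [hs])
    · exact hc _ hmem (by simp [hs])
  refine ⟨(a, b, c), fun s hs => ?_, fun s hs => ?_⟩ <;>
  · have := hout s hs
    simp_all [support, translate_apply]

end Translation

end CubicCode1Torus

open CubicCode1Torus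

theorem cubicCode1_distance_ge_L_general (L : ℕ) [NeZero L]
    (v : Pauli L)
    (hlog : ∀ p : Site L, pairing L v (gZ L p) = 0 ∧ pairing L v (fX L p) = 0)
    (hnontriv : v ∉ stab L) :
    L ≤ (support L v).ncard := by
  by_contra! hlt
  obtain ⟨o, hv₁, hv₂⟩ := exists_translate_vanishesOnCoordPlanes hlt
  refine hnontriv ?_
  rw [← translate_neg_translate o v]
  exact translate_mem_stab _ (mem_stab_of_isLogical (isLogical_translate hlog o) hv₁ hv₂)

/-- Every nontrivial logical operator of Cubic Code 1 on the torus `(ZMod L)³`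
has support of size at least `L`. -/
theorem cubicCode1_distance_ge_L (L : ℕ) [NeZero L] (hL : 2 ≤ L)
    (v : Pauli L)
    (hlog : ∀ p : Site L, pairing L v (gZ L p) = 0 ∧ pairing L v (fX L p) = 0)
    (hnontriv : v ∉ stab L) :
    L ≤ (support L v).ncard :=
  cubicCode1_distance_ge_L_general L v hlog hnontriv
end

section
/- Let f₁, f₂ : ℕ → α be eventually periodic functions with periods t₁ and t₂ respectively, where t₁ ≠ t₂, and suppose f₁(n + t₁) = f₁(n) for all n > n₁ and f₂(n + t₂) = f₂(n) for all n > n₂. Then there exists n' ≤ max(n₁, n₂) + lcm(t₁, t₂) such that f₁(n') ≠ f₂(n'). -/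
/-!
If `f₁` and `f₂` agreed on `[0, max n₁ n₂ + lcm t₁ t₂]`, then, both being eventually periodic
with quasi-period `lcm t₁ t₂` beyond `max n₁ n₂`, they would agree everywhere by strong
induction. Equal functions have equal periods, contradicting `t₁ ≠ t₂`.
-/

def IsQuasiPeriod {α : Type*} (f : ℕ → α) (t n₀ : ℕ) : Prop :=
  ∀ n > n₀, f (n + t) = f n

namespace IsQuasiPeriod

variable {α : Type*} {f g : ℕ → α} {t s m m' : ℕ}

theorem mono (h : IsQuasiPeriod f t m) (hm : m ≤ m') : IsQuasiPeriod f t m' :=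
  fun n hn => h n (lt_of_le_of_lt hm hn)

theorem mul (h : IsQuasiPeriod f t m) (k : ℕ) : IsQuasiPeriod f (k * t) m := by
  induction k with
  | zero => simp [IsQuasiPeriod]
  | succ k ih =>
    intro n hn
    rw [add_one_mul, ← add_assoc, h (n + k * t) (by omega), ih n hn]

theorem of_dvd (h : IsQuasiPeriod f t m) (hts : t ∣ s) : IsQuasiPeriod f s m := by
  obtain ⟨k, rfl⟩ := hts
  simpa only [mul_comm t k] using h.mul k

theorem eq_of_eqOn_le (hf : IsQuasiPeriod f t m) (hg : IsQuasiPeriod g t m) (ht : 0 < t)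
    (hfg : ∀ n ≤ m + t, f n = g n) : f = g := by
  funext n
  induction n using Nat.strong_induction_on with
  | _ n ih =>
    rcases le_or_gt n (m + t) with hn | hn
    · exact hfg n hn
    · obtain ⟨k, rfl⟩ : ∃ k, n = k + t := ⟨n - t, by omega⟩
      rw [hf k (by omega), hg k (by omega), ih k (by omega)]

end IsQuasiPeriod

/-- Two eventually periodic functions with different periods disagree at some point
`n' ≤ max(n₁,n₂) + lcm(t₁,t₂)`. -/
theorem eventually_periodic_ne_of_period_ne {α : Type*} (f₁ f₂ : ℕ → α)
    (t₁ t₂ n₁ n₂ : ℕ) (ht₁ : 1 ≤ t₁) (ht₂ : 1 ≤ t₂)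
    (h₁ : ∀ n > n₁, f₁ (n + t₁) = f₁ n) (h₂ : ∀ n > n₂, f₂ (n + t₂) = f₂ n)
    (hp₁ : t₁ = sInf {u : ℕ | 1 ≤ u ∧ ∃ m : ℕ, ∀ n > m, f₁ (n + u) = f₁ n})
    (hp₂ : t₂ = sInf {u : ℕ | 1 ≤ u ∧ ∃ m : ℕ, ∀ n > m, f₂ (n + u) = f₂ n})
    (hne : t₁ ≠ t₂) :
    ∃ n' ≤ max n₁ n₂ + Nat.lcm t₁ t₂, f₁ n' ≠ f₂ n' := by
  by_contra! hagree
  have hL₁ : IsQuasiPeriod f₁ (Nat.lcm t₁ t₂) (max n₁ n₂) :=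
    (IsQuasiPeriod.of_dvd h₁ (Nat.dvd_lcm_left t₁ t₂)).mono (le_max_left n₁ n₂)
  have hL₂ : IsQuasiPeriod f₂ (Nat.lcm t₁ t₂) (max n₁ n₂) :=
    (IsQuasiPeriod.of_dvd h₂ (Nat.dvd_lcm_right t₁ t₂)).mono (le_max_right n₁ n₂)
  obtain rfl : f₁ = f₂ := hL₁.eq_of_eqOn_le hL₂ (Nat.lcm_pos ht₁ ht₂) hagree
  exact hne (hp₁.trans hp₂.symm)
end

section
/- Let V be a vector space over F₂ = ZMod 2, let M : V → V be a linear map with M ∘ M = M, and let b : V × V → V be an arbitrary function. Suppose sequences a, p : ℕ → V satisfy a(j+1) = M(a(j)) + b(p(j+1), p(j)) for all j ≥ 1. If p is eventually periodic with quasi-period t ≥ 1 and offset n₀ (i.e., p(n+t) = p(n) for all n > n₀), then a is eventually periodic with quasi-period 2t and offset n₀ + t (i.e., a(n+2t) = a(n) for all n > n₀ + t). -/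
/-! Put `d n = a (n + t) - a n`. Once `p` is periodic the forcing terms cancel in `d`, so that
`d (n + 1) = M (d n)` for `n > n₀`; as `M` is idempotent, `d` is constant for `n > n₀ + 1`. Hence
`a (n + 2t) - a n = d (n + t) + d n = 2 • d n = 0` over `F₂`. -/

theorem sub_shift_succ_eq_map_of_periodic_forcing {V F : Type*} [AddCommGroup V] [FunLike F V V]
    [AddMonoidHomClass F V V] (M : F) {a c : ℕ → V} {N t : ℕ}
    (ha : ∀ j ≥ N, a (j + 1) = M (a j) + c j) (hc : ∀ n ≥ N, c (n + t) = c n)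
    {n : ℕ} (hn : N ≤ n) :
    a (n + 1 + t) - a (n + 1) = M (a (n + t) - a n) := by
  rw [Nat.add_right_comm, ha (n + t) (by omega), ha n hn, hc n hn, map_sub]
  abel

theorem add_eq_of_succ_eq_idempotent {α : Type*} {f : α → α} (hf : ∀ x, f (f x) = f x)
    {d : ℕ → α} {N : ℕ} (hd : ∀ n ≥ N, d (n + 1) = f (d n)) {n : ℕ} (hn : N < n) (k : ℕ) :
    d (n + k) = d n := by
  have fixed : f (d n) = d n := by
    obtain ⟨m, hm, rfl⟩ : ∃ m ≥ N, n = m + 1 := ⟨n - 1, by omega, by omega⟩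
    rw [hd m hm, hf]
  induction k with
  | zero => rfl
  | succ k ih => rw [← add_assoc, hd _ (by omega), ih, fixed]

theorem ZModModule.eq_of_sub_eq_sub {G : Type*} [AddCommGroup G] [Module (ZMod 2) G]
    {x y z : G} (h : x - y = y - z) : x = z := by
  rw [← sub_eq_zero, ← sub_add_sub_cancel x y z, h, ZModModule.add_self]

/-- Doubling of quasi-period: over `F₂`, if `M` is idempotent,
`a(j+1) = M(a(j)) + b(p(j+1), p(j))` for `j ≥ 1`, and the previous row `p` is eventually
periodic with quasi-period `t` and offset `n₀`, then `a` is eventually periodic with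
quasi-period `2t` and offset `n₀ + t`. -/
theorem quasiPeriod_doubling_idempotent {V : Type*}
    [AddCommGroup V] [Module (ZMod 2) V]
    (M : V →ₗ[ZMod 2] V) (hM : M ∘ₗ M = M) (b : V × V → V) (a p : ℕ → V)
    (ha : ∀ j : ℕ, 1 ≤ j → a (j + 1) = M (a j) + b (p (j + 1), p j))
    (t n₀ : ℕ) (ht : 1 ≤ t) (hp : ∀ n > n₀, p (n + t) = p n) :
    ∀ n > n₀ + t, a (n + 2 * t) = a n := by
  set d : ℕ → V := fun n => a (n + t) - a n
  have hd : ∀ n ≥ n₀ + 1, d (n + 1) = M (d n) := fun n hn =>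
    sub_shift_succ_eq_map_of_periodic_forcing M (c := fun j => b (p (j + 1), p j))
      (fun j hj => ha j (by omega))
      (fun m hm => by simp only [Nat.add_right_comm m t 1, hp m hm, hp (m + 1) (by omega)]) hn
  have hM' : ∀ x, M (M x) = M x := LinearMap.congr_fun hM
  intro n hn
  have hconst : d (n + t) = d n := add_eq_of_succ_eq_idempotent hM' hd (by omega) t
  refine ZModModule.eq_of_sub_eq_sub (y := a (n + t)) ?_
  simpa only [d, two_mul, add_assoc] using hconst
end

section
/- Let V be a vector space over F₂ = ZMod 2, let N : V → V be a linear map with N ∘ N = id, and let b : V × V → V be an arbitrary function. Suppose sequences a, p : ℕ → V satisfy a(j+1) = N(a(j)) + b(p(j+1), p(j)) for all j ≥ 1. If p is eventually periodic with quasi-period t ≥ 1 and offset n₀ (i.e., p(n+t) = p(n) for all n > n₀), then a is eventually periodic with quasi-period 4t and offset n₀ (i.e., a(n+4t) = a(n) for all n > n₀). -/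
/-!
Writing `c j = b (p (j + 1), p j)`, the forcing term `c` is eventually periodic with period `2t`,
so the difference `D n = a (n + 2t) - a n` obeys the homogeneous recursion `D (n + 1) = N (D n)`.
As `N` is an involution, `D (n + 2t) = N^[2t] (D n) = D n`, hence
`a (n + 4t) - a n = D n + D (n + 2t) = 2 • D n`, which vanishes over `F₂`.
-/

section EventualRecursion

variable {α : Type*} {f : ℕ → α} {n₀ : ℕ}

theorem apply_add_mul_eq_of_forall_gt {t : ℕ} (hf : ∀ n > n₀, f (n + t) = f n) (k : ℕ) :
    ∀ n > n₀, f (n + k * t) = f n := by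
  induction k with
  | zero => simp
  | succ k ih =>
    intro n hn
    rw [add_mul, one_mul, ← add_assoc, hf _ (by omega), ih n hn]

theorem apply_add_eq_iterate_of_forall_gt {g : α → α} (hf : ∀ n > n₀, f (n + 1) = g (f n))
    (k : ℕ) : ∀ n > n₀, f (n + k) = g^[k] (f n) := by
  induction k with
  | zero => simp
  | succ k ih =>
    intro n hn
    rw [← add_assoc, hf _ (by omega), ih n hn, Function.iterate_succ_apply']

end EventualRecursion

theorem sub_add_one_eq_map_sub_of_forall_gt {V F : Type*} [AddCommGroup V] [FunLike F V V]
    [AddMonoidHomClass F V V] {N : F} {a c : ℕ → V} {T n₀ : ℕ}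
    (ha : ∀ j > n₀, a (j + 1) = N (a j) + c j) (hc : ∀ j > n₀, c (j + T) = c j) :
    ∀ n > n₀, a (n + 1 + T) - a (n + 1) = N (a (n + T) - a n) := by
  intro n hn
  rw [add_right_comm, ha _ (by omega), ha n hn, hc n hn, map_sub]
  abel

theorem add_self_eq_zero_of_module_zmod_two {V : Type*} [AddCommGroup V] [Module (ZMod 2) V]
    (v : V) : v + v = 0 := by
  rw [← two_smul (ZMod 2), show (2 : ZMod 2) = 0 from rfl, zero_smul]

theorem quasiPeriod_quadrupling_involution_general {V : Type*}
    [AddCommGroup V] [Module (ZMod 2) V]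
    (N : V →ₗ[ZMod 2] V) (hN : N ∘ₗ N = LinearMap.id) (b : V × V → V) (a p : ℕ → V)
    (ha : ∀ j : ℕ, 1 ≤ j → a (j + 1) = N (a j) + b (p (j + 1), p j))
    (t n₀ : ℕ) (hp : ∀ n > n₀, p (n + t) = p n) :
    ∀ n > n₀, a (n + 4 * t) = a n := by
  have hinv : Function.Involutive N := LinearMap.congr_fun hN
  have hp2 : ∀ n > n₀, p (n + 2 * t) = p n := apply_add_mul_eq_of_forall_gt hp 2
  have hc : ∀ j > n₀, b (p (j + 2 * t + 1), p (j + 2 * t)) = b (p (j + 1), p j) := by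
    intro j hj
    rw [add_right_comm, hp2 _ (by omega), hp2 j hj]
  set D : ℕ → V := fun n => a (n + 2 * t) - a n
  have hD : ∀ n > n₀, D (n + 1) = N (D n) :=
    sub_add_one_eq_map_sub_of_forall_gt (fun j hj => ha j (by omega)) hc
  intro n hn
  have hDper : D (n + 2 * t) = D n := by
    rw [apply_add_eq_iterate_of_forall_gt hD _ n hn, hinv.iterate_two_mul, id]
  calc a (n + 4 * t) = a n + (D n + D (n + 2 * t)) := by
        simp only [D, show n + 2 * t + 2 * t = n + 4 * t by ring]
        abel
    _ = a n := by rw [hDper, add_self_eq_zero_of_module_zmod_two, add_zero]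

/-- Quadrupling of quasi-period: over `F₂`, if `N` is an involution,
`a(j+1) = N(a(j)) + b(p(j+1), p(j))` for `j ≥ 1`, and the previous row `p` is eventually
periodic with quasi-period `t` and offset `n₀`, then `a` is eventually periodic with
quasi-period `4t` and offset `n₀`. -/
theorem quasiPeriod_quadrupling_involution {V : Type*}
    [AddCommGroup V] [Module (ZMod 2) V]
    (N : V →ₗ[ZMod 2] V) (hN : N ∘ₗ N = LinearMap.id) (b : V × V → V) (a p : ℕ → V)
    (ha : ∀ j : ℕ, 1 ≤ j → a (j + 1) = N (a j) + b (p (j + 1), p j))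
    (t n₀ : ℕ) (ht : 1 ≤ t) (hp : ∀ n > n₀, p (n + t) = p n) :
    ∀ n > n₀, a (n + 4 * t) = a n :=
  quasiPeriod_quadrupling_involution_general N hN b a p ha t n₀ hp
end

section
/- Fix an integer L ≥ 2 and consider Cubic Code 1 on the torus (ZMod L)³. The F₂-dimension of the stabilizer subspace S (the span of the 2L³ generators {g_p, f_p : p ∈ Λ}) is at least 2L³ − 4L; equivalently, the number of encoded qubits k = 2L³ − dim S satisfies k ≤ 4L. -/
open CubicCode1Torus

/-!
The stabilizer space contains `span {ξ_p} × span {ζ_p}`. Identify functions on `Λ` with the group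
algebra `R = F₂[Λ]`, with `x, y, z` the unit translations. Then `p ↦ ζ_p` is `p ↦ (x^p P₁, x^p P₂)`
for `P₁ = 1 + y + xy + yz` and `P₂ = x + y + z + xyz`, so the linear relations among the `ζ_p` form
the annihilator of the ideal `I = (P₁, P₂)`. The Frobenius form `(a, b) ↦ [x⁰](ab)` on `R` is
nondegenerate, so this annihilator has dimension at most `dim R/I`. In `R/I` we have
`y (1 + x + z) = 1` and `y^L = 1`, so `y = (1 + x + z)^(L-1)`, and `z² = 1 + x + z + xz + x²`;
hence `R/I` is spanned by the `x^i z^j` with `i < L`, `j < 2`. The ideal of the `ξ_p` is the image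
of `I` under the antipode `g ↦ -g`, up to a monomial unit, so the same bound holds for it.
-/

open AddMonoidAlgebra Module

theorem Submodule.finrank_add_finrank_le_of_prod_le {K V W : Type*} [Field K] [AddCommGroup V]
    [Module K V] [AddCommGroup W] [Module K W] [FiniteDimensional K V] [FiniteDimensional K W]
    {p : Submodule K V} {q : Submodule K W} {r : Submodule K (V × W)} (h : p.prod q ≤ r) :
    finrank K p + finrank K q ≤ finrank K r := by
  rw [← finrank_prod]
  refine LinearMap.finrank_le_finrank_of_injective
    (f := (p.subtype.prodMap q.subtype).codRestrict r fun x => h ⟨x.1.2, x.2.2⟩) ?_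
  exact (LinearMap.injective_codRestrict_iff _).2 (p.injective_subtype.prodMap q.injective_subtype)

namespace AddMonoidAlgebra

variable {k G C : Type*} [Field k] [AddCommGroup G] [Fintype C]

noncomputable def frobeniusForm : k[G] →ₗ[k] Dual k k[G] :=
  LinearMap.mk₂ k (fun a b => (a * b).coeff 0)
    (fun a a' b => by rw [add_mul, coeff_add]; rfl)
    (fun r a b => by rw [smul_mul_assoc, coeff_smul]; rfl)
    (fun a b b' => by rw [mul_add, coeff_add]; rfl)
    (fun r a b => by rw [mul_smul_comm, coeff_smul]; rfl)

theorem frobeniusForm_injective : Function.Injective (frobeniusForm (k := k) (G := G)) := by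
  refine (injective_iff_map_eq_zero _).2 fun a ha => ext <| Finsupp.ext fun g => ?_
  simpa [frobeniusForm] using LinearMap.congr_fun ha (single (-g) 1)

theorem finrank_annihilator_le_finrank_quotient [Finite G] (I : Ideal k[G]) :
    finrank k (I.annihilator.restrictScalars k) ≤ finrank k (k[G] ⧸ I) := by
  let J := I.restrictScalars k
  have hmap : (I.annihilator.restrictScalars k).map frobeniusForm ≤ J.dualAnnihilator := by
    rintro _ ⟨a, ha, rfl⟩
    refine (Submodule.mem_dualAnnihilator _).2 fun b hb => ?_
    have hab : a * b = 0 := Submodule.mem_annihilator.1 ha b hb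
    simp [frobeniusForm, hab]
  calc finrank k (I.annihilator.restrictScalars k)
      = finrank k ((I.annihilator.restrictScalars k).map frobeniusForm) :=
        (Submodule.equivMapOfInjective _ frobeniusForm_injective _).finrank_eq
    _ ≤ finrank k J.dualAnnihilator := Submodule.finrank_mono hmap
    _ = finrank k (k[G] ⧸ J) :=
        J.dualQuotEquivDualAnnihilator.finrank_eq.symm.trans Subspace.dual_finrank_eq
    _ = finrank k (k[G] ⧸ I) := (Submodule.Quotient.restrictScalarsEquiv k I).finrank_eq

noncomputable def pattern (o : C → G) (t : C → k) : k[G] := ∑ c, single (o c) (t c)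

noncomputable def patternIdeal (o : C → G) (w : C → k × k) : Ideal k[G] :=
  Ideal.span {pattern o (fun c => (w c).1), pattern o (fun c => (w c).2)}

theorem patternIdeal_swap (o : C → G) (w : C → k × k) :
    patternIdeal o (Prod.swap ∘ w) = patternIdeal o w := by
  rw [patternIdeal, patternIdeal, Set.pair_comm]
  rfl

theorem pattern_comp_of_reflect (o : C → G) (e : C ≃ C) (g : G) (he : ∀ c, o (e c) = g - o c)
    (t : C → k) :
    pattern o (fun c => t (e c)) = single g 1 * domCongr k k (AddEquiv.neg G) (pattern o t) := by
  rw [pattern, pattern, map_sum, Finset.mul_sum]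
  refine Fintype.sum_equiv e _ _ fun c => ?_
  rw [domCongr_single, single_mul_single, one_mul, he]
  congr 1
  change o c = g + -(g - o c)
  abel

theorem patternIdeal_comp_of_reflect (o : C → G) (e : C ≃ C) (g : G)
    (he : ∀ c, o (e c) = g - o c) (w : C → k × k) :
    patternIdeal o (w ∘ e) = (patternIdeal o w).map (domCongr k k (AddEquiv.neg G)) := by
  have hu : IsUnit (single g (1 : k)) :=
    IsUnit.of_mul_eq_one (single (-g) 1) (by rw [single_mul_single, add_neg_cancel, mul_one]; rfl)
  rw [patternIdeal, patternIdeal, Ideal.map_span, Set.image_pair]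
  simp only [Function.comp_apply]
  rw [pattern_comp_of_reflect o e g he fun c => (w c).1,
    pattern_comp_of_reflect o e g he fun c => (w c).2, Ideal.span_insert, Ideal.span_insert,
    Ideal.span_singleton_mul_left_unit hu, Ideal.span_singleton_mul_left_unit hu]

noncomputable def translatesMap (o : C → G) (w : C → k × k) : k[G] →ₗ[k] G → k × k where
  toFun a s := ((a * pattern o fun c => (w c).1).coeff s, (a * pattern o fun c => (w c).2).coeff s)
  map_add' a b := by ext s <;> simp [add_mul]
  map_smul' r a := by ext s <;> simp

theorem ker_translatesMap (o : C → G) (w : C → k × k) :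
    LinearMap.ker (translatesMap o w) = (patternIdeal o w).annihilator.restrictScalars k := by
  ext a
  simp only [LinearMap.mem_ker, Submodule.restrictScalars_mem, patternIdeal,
    Submodule.mem_annihilator_span, Subtype.forall, Set.mem_insert_iff, Set.mem_singleton_iff,
    forall_eq_or_imp, forall_eq, smul_eq_mul, funext_iff, translatesMap, LinearMap.coe_mk,
    AddHom.coe_mk, Pi.zero_apply, Prod.ext_iff, Prod.fst_zero, Prod.snd_zero, forall_and,
    ← coeff_eq_zero, Finsupp.ext_iff, Finsupp.coe_zero]

variable [DecidableEq G]

def translates {M : Type*} [AddCommMonoid M] (o : C → G) (w : C → M) (p : G) : G → M :=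
  fun s => ∑ c, if s = p + o c then w c else 0

theorem coeff_single_mul_pattern (o : C → G) (t : C → k) (p s : G) :
    (single p 1 * pattern o t).coeff s = ∑ c, if s = p + o c then t c else 0 := by
  simp only [coeff_single_mul_apply, one_mul, pattern, coeff_sum, Finsupp.finsetSum_apply,
    coeff_single, Finsupp.single_apply]
  refine Finset.sum_congr rfl fun c _ => if_congr ?_ rfl rfl
  rw [eq_comm, ← neg_add_eq_iff_eq_add]

theorem translatesMap_single (o : C → G) (w : C → k × k) (p : G) :
    translatesMap o w (single p 1) = translates o w p := by
  ext s <;> simp only [translatesMap, LinearMap.coe_mk, AddHom.coe_mk, coeff_single_mul_pattern,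
    translates, Prod.fst_sum, Prod.snd_sum, apply_ite Prod.fst, apply_ite Prod.snd, Prod.fst_zero,
    Prod.snd_zero]

theorem range_translatesMap (o : C → G) (w : C → k × k) :
    LinearMap.range (translatesMap o w) = Submodule.span k (Set.range (translates o w)) := by
  rw [LinearMap.range_eq_map, ← (basis G k).span_eq, Submodule.map_span, ← Set.range_comp]
  congr 2
  funext p
  simp [translatesMap_single]

theorem card_le_finrank_span_translates_add [Fintype G] (o : C → G) (w : C → k × k) :
    Fintype.card G ≤ finrank k (Submodule.span k (Set.range (translates o w)))
      + finrank k (k[G] ⧸ patternIdeal o w) := by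
  have h := LinearMap.finrank_range_add_finrank_ker (translatesMap o w)
  rw [range_translatesMap, ker_translatesMap, finrank_eq_card_basis (basis G k)] at h
  have := finrank_annihilator_le_finrank_quotient (patternIdeal o w)
  omega

end AddMonoidAlgebra

section CubicRelations

variable {k A : Type*} [CommRing A] {n : ℕ} {x y z : A}

theorem pow_mul_pow_mem_span_pow_mul_pow [CommSemiring k] [Algebra k A] [NeZero n]
    (hx : x ^ n = 1) (hz : z ^ 2 = 1 + x + z + x * z + x ^ 2) (i j : ℕ) :
    x ^ i * z ^ j ∈
      Submodule.span k (Set.range fun ij : Fin n × Fin 2 => x ^ (ij.1 : ℕ) * z ^ (ij.2 : ℕ)) := by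
  induction j using Nat.twoStepInduction generalizing i with
  | zero | one =>
    rw [pow_eq_pow_mod i hx]
    exact Submodule.subset_span ⟨(⟨i % n, Nat.mod_lt i (NeZero.pos n)⟩, ⟨_, by norm_num⟩), rfl⟩
  | more j ih₀ ih₁ =>
    have h : x ^ i * z ^ (j + 2) = x ^ i * z ^ j + x ^ (i + 1) * z ^ j + x ^ i * z ^ (j + 1)
        + x ^ (i + 1) * z ^ (j + 1) + x ^ (i + 2) * z ^ j := by
      linear_combination x ^ i * z ^ j * hz
    rw [h]
    exact add_mem (add_mem (add_mem (add_mem (ih₀ i) (ih₀ _)) (ih₁ i)) (ih₁ _)) (ih₀ _)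

theorem finrank_le_of_cubicCode1_relations [Field k] [Algebra k A] [NeZero n]
    (hgen : Algebra.adjoin k {x, y, z} = ⊤) (hchar : (2 : A) = 0) (hx : x ^ n = 1)
    (hy : y ^ n = 1) (h₁ : 1 + y + x * y + y * z = 0) (h₂ : x + y + z + x * y * z = 0) :
    finrank k A ≤ 2 * n := by
  have hinv : y * (1 + x + z) = 1 := by linear_combination h₁ - hchar
  have hz : z ^ 2 = 1 + x + z + x * z + x ^ 2 := by
    linear_combination (1 + x + z) * h₂ - (1 + x * z) * h₁ - (x + z + x * z + x ^ 2) * hchar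
  have hy_eq : y = (1 + x + z) ^ (n - 1) :=
    calc y = y * (y * (1 + x + z)) ^ (n - 1) := by rw [hinv, one_pow, mul_one]
      _ = y ^ n * (1 + x + z) ^ (n - 1) := by
        rw [mul_pow, ← mul_assoc, ← pow_succ', Nat.sub_add_cancel NeZero.one_le]
      _ = (1 + x + z) ^ (n - 1) := by rw [hy, one_mul]
  have hxz : Algebra.adjoin k {x, y, z} ≤ Algebra.adjoin k {x, z} := by
    have hx' : x ∈ Algebra.adjoin k {x, z} := Algebra.subset_adjoin (by simp)
    have hz' : z ∈ Algebra.adjoin k {x, z} := Algebra.subset_adjoin (by simp)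
    refine Algebra.adjoin_le (Set.insert_subset hx' (Set.insert_subset ?_ (by simpa using hz')))
    rw [hy_eq]
    exact pow_mem (add_mem (add_mem (one_mem _) hx') hz') _
  set S := Set.range fun ij : Fin n × Fin 2 => x ^ (ij.1 : ℕ) * z ^ (ij.2 : ℕ)
  have hS : Submodule.span k S = ⊤ := by
    refine top_le_iff.1 ?_
    calc (⊤ : Submodule k A) = Subalgebra.toSubmodule (Algebra.adjoin k {x, y, z}) := by
          rw [hgen, Algebra.top_toSubmodule]
      _ ≤ Subalgebra.toSubmodule (Algebra.adjoin k {x, z}) := hxz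
      _ = Submodule.span k (Submonoid.closure {x, z}) := Algebra.adjoin_eq_span k _
      _ ≤ Submodule.span k S := by
        refine Submodule.span_le.2 fun a ha => ?_
        obtain ⟨i, j, rfl⟩ := (Submonoid.mem_closure_pair _ _ _).1 ha
        exact pow_mul_pow_mem_span_pow_mul_pow hx hz i j
  calc finrank k A = S.finrank k := by rw [Set.finrank, hS, finrank_top]
    _ ≤ Fintype.card (Fin n × Fin 2) := finrank_range_le_card _
    _ = 2 * n := by simp [mul_comm]

end CubicRelations

namespace CubicCode1Torus

variable (L : ℕ)

def csite (c : Bool × Bool × Bool) : Site L := (emb L c.1, emb L c.2.1, emb L c.2.2)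

def cornerFlip : Equiv.Perm (Bool × Bool × Bool) :=
  Equiv.prodCongr Equiv.boolNot (Equiv.prodCongr Equiv.boolNot Equiv.boolNot)

theorem csite_cornerFlip (c : Bool × Bool × Bool) :
    csite L (cornerFlip c) = csite L (true, true, true) - csite L c := by
  obtain ⟨a, b, d⟩ := c
  cases a <;> cases b <;> cases d <;> simp [csite, cornerFlip, emb]

noncomputable def X₁ : (ZMod 2)[Site L] := single (1, 0, 0) 1

noncomputable def X₂ : (ZMod 2)[Site L] := single (0, 1, 0) 1

noncomputable def X₃ : (ZMod 2)[Site L] := single (0, 0, 1) 1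

theorem pattern_z_fst :
    pattern (csite L) (fun c => (z c).1) = 1 + X₂ L + X₁ L * X₂ L + X₂ L * X₃ L := by
  simp [pattern, Fintype.sum_prod_type, z, csite, emb, X₁, X₂, X₃, single_mul_single, one_def]
  abel

theorem pattern_z_snd :
    pattern (csite L) (fun c => (z c).2) = X₁ L + X₂ L + X₃ L + X₁ L * X₂ L * X₃ L := by
  simp [pattern, Fintype.sum_prod_type, z, csite, emb, X₁, X₂, X₃, single_mul_single]
  abel

theorem X₁_pow : X₁ L ^ L = 1 := by simp [X₁, single_pow, one_def, Prod.mk_zero_zero]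

theorem X₂_pow : X₂ L ^ L = 1 := by simp [X₂, single_pow, one_def, Prod.mk_zero_zero]

variable [NeZero L]

theorem zeta_eq_translates : zeta L = translates (csite L) z := rfl

theorem xi_eq_translates : xi L = translates (csite L) (Prod.swap ∘ z ∘ cornerFlip) := rfl

theorem single_eq_X_pow (s : Site L) :
    single s 1 = X₁ L ^ s.1.val * X₂ L ^ s.2.1.val * X₃ L ^ s.2.2.val := by
  simp [X₁, X₂, X₃, single_pow, single_mul_single]

theorem adjoin_X_eq_top : Algebra.adjoin (ZMod 2) {X₁ L, X₂ L, X₃ L} = ⊤ := by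
  have hX : ∀ a ∈ ({X₁ L, X₂ L, X₃ L} : Set _), a ∈ Algebra.adjoin (ZMod 2) {X₁ L, X₂ L, X₃ L} :=
    fun a ha => Algebra.subset_adjoin ha
  refine Algebra.eq_top_iff.2 fun a => ?_
  induction a using AddMonoidAlgebra.induction_on with
  | of s =>
    rw [of_apply, single_eq_X_pow]
    exact mul_mem (mul_mem (pow_mem (hX _ (by simp)) _) (pow_mem (hX _ (by simp)) _))
      (pow_mem (hX _ (by simp)) _)
  | add a b ha hb => exact add_mem ha hb
  | smul r a ha => exact Subalgebra.smul_mem _ ha r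

theorem finrank_quotient_patternIdeal_z_le :
    finrank (ZMod 2) ((ZMod 2)[Site L] ⧸ patternIdeal (csite L) z) ≤ 2 * L := by
  set I := patternIdeal (csite L) z
  set π := Ideal.Quotient.mkₐ (ZMod 2) I
  have hI : ∀ a ∈ I, π a = 0 := fun a ha => Ideal.Quotient.eq_zero_iff_mem.2 ha
  refine finrank_le_of_cubicCode1_relations (x := π (X₁ L)) (y := π (X₂ L)) (z := π (X₃ L))
    ?_ ?_ ?_ ?_ ?_ ?_
  · rw [← Set.image_singleton, ← Set.image_insert_eq, ← Set.image_insert_eq, ← AlgHom.map_adjoin,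
      adjoin_X_eq_top, Algebra.map_top, AlgHom.range_eq_top]
    exact Ideal.Quotient.mkₐ_surjective _ _
  · calc (2 : (ZMod 2)[Site L] ⧸ I) = algebraMap (ZMod 2) ((ZMod 2)[Site L] ⧸ I) 2 :=
          (map_ofNat _ 2).symm
      _ = 0 := by rw [show (2 : ZMod 2) = 0 from rfl, map_zero]
  · rw [← map_pow, X₁_pow, map_one]
  · rw [← map_pow, X₂_pow, map_one]
  · have h := hI _ (Ideal.subset_span (Set.mem_insert _ _))
    rw [pattern_z_fst] at h
    simpa using h
  · have h := hI _ (Ideal.subset_span (Set.mem_insert_of_mem _ rfl))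
    rw [pattern_z_snd] at h
    simpa using h

theorem finrank_quotient_patternIdeal_xi_le :
    finrank (ZMod 2) ((ZMod 2)[Site L] ⧸ patternIdeal (csite L) (Prod.swap ∘ z ∘ cornerFlip))
      ≤ 2 * L := by
  rw [patternIdeal_swap, patternIdeal_comp_of_reflect (csite L) cornerFlip _ (csite_cornerFlip L)]
  exact (Ideal.quotientEquivAlg _ _ (domCongr (ZMod 2) (ZMod 2) (AddEquiv.neg (Site L))) rfl
    |>.toLinearEquiv.finrank_eq).symm.trans_le (finrank_quotient_patternIdeal_z_le L)

theorem prod_span_xi_span_zeta_le_stab :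
    (Submodule.span (ZMod 2) (Set.range (xi L))).prod
      (Submodule.span (ZMod 2) (Set.range (zeta L))) ≤ stab L := by
  rw [← LinearMap.span_inl_union_inr]
  refine Submodule.span_mono ?_
  rintro _ (⟨_, ⟨p, rfl⟩, rfl⟩ | ⟨_, ⟨p, rfl⟩, rfl⟩)
  exacts [⟨p, Or.inr rfl⟩, ⟨p, Or.inl rfl⟩]

end CubicCode1Torus

theorem cubicCode1_encoded_qubits_le_general (L : ℕ) [NeZero L] :
    2 * L ^ 3 - 4 * L ≤ Module.finrank (ZMod 2) (stab L) ∧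
    2 * L ^ 3 - Module.finrank (ZMod 2) (stab L) ≤ 4 * L := by
  have hcard : Fintype.card (Site L) = L ^ 3 := by simp [pow_succ, mul_assoc]
  have hzeta : L ^ 3 ≤ finrank (ZMod 2) (Submodule.span (ZMod 2) (Set.range (zeta L)))
      + finrank (ZMod 2) ((ZMod 2)[Site L] ⧸ patternIdeal (csite L) z) :=
    hcard ▸ card_le_finrank_span_translates_add (csite L) z
  have hxi : L ^ 3 ≤ finrank (ZMod 2) (Submodule.span (ZMod 2) (Set.range (xi L)))
      + finrank (ZMod 2) ((ZMod 2)[Site L] ⧸ patternIdeal (csite L) (Prod.swap ∘ z ∘ cornerFlip)) :=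
    hcard ▸ card_le_finrank_span_translates_add (csite L) _
  have hstab : finrank (ZMod 2) (Submodule.span (ZMod 2) (Set.range (xi L)))
      + finrank (ZMod 2) (Submodule.span (ZMod 2) (Set.range (zeta L)))
      ≤ finrank (ZMod 2) (stab L) :=
    Submodule.finrank_add_finrank_le_of_prod_le (prod_span_xi_span_zeta_le_stab L)
  have hIz := finrank_quotient_patternIdeal_z_le L
  have hIxi := finrank_quotient_patternIdeal_xi_le L
  omega

/-- The `F₂`-dimension of the stabilizer subspace of Cubic Code 1 on the torus `(ZMod L)³`
is at least `2L³ − 4L`; equivalently, the number of encoded qubits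
`k = 2L³ − dim S` satisfies `k ≤ 4L`. -/
theorem cubicCode1_encoded_qubits_le (L : ℕ) [NeZero L] (hL : 2 ≤ L) :
    2 * L ^ 3 - 4 * L ≤ Module.finrank (ZMod 2) (stab L) ∧
    2 * L ^ 3 - Module.finrank (ZMod 2) (stab L) ≤ 4 * L :=
  cubicCode1_encoded_qubits_le_general L
end

section
/- Let L > 4 be an integer and let C be the L × L matrix over F₂ = ZMod 2 with entries C(i,j) = 1 if i − j ≡ 2 (mod L) or i − j ≡ −2 (mod L), and C(i,j) = 0 otherwise. Then the rank of C equals L − 1 if L is odd, L − 4 if 4 divides L, and L − 2 if L is even but 4 does not divide L; in particular, for even L the rank equals 4⌈L/4⌉ − 4. -/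
/-!
Over `𝔽₂` the equation `C v = 0` reads `v (i - 2) = v (i + 2)` for all `i`, i.e. `v` is
periodic with period `4` on `ZMod L`. Such `v` are exactly the functions on `ZMod L ⧸ ⟨4⟩`,
a group of order `gcd L 4`, so rank–nullity gives `rank C = L - gcd L 4`.
-/

open Function Matrix

section Circulant

variable {G R : Type*} [AddCommGroup G]

theorem mem_range_funLeft_mk_zmultiples_iff [Semiring R] (c : G) (w : G → R) :
    w ∈ LinearMap.range
        (LinearMap.funLeft R R (QuotientAddGroup.mk : G → G ⧸ AddSubgroup.zmultiples c)) ↔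
      Periodic w c :=
  ⟨by rintro ⟨u, rfl⟩ x; simp [LinearMap.funLeft_apply], fun h => ⟨h.lift, rfl⟩⟩

variable [Fintype G] [DecidableEq G]

theorem Matrix.circulant_single_one_mulVec_apply [NonAssocSemiring R] (a : G) (w : G → R)
    (i : G) : (circulant (Pi.single a 1) *ᵥ w) i = w (i - a) := by
  simp [mulVec, dotProduct, circulant_apply, Pi.single_apply, sub_eq_iff_comm]

theorem Matrix.circulant_single_add_single_mulVec_eq_zero_iff [Ring R] [CharP R 2]
    (a b : G) (w : G → R) :
    circulant (Pi.single a 1 + Pi.single b 1) *ᵥ w = 0 ↔ Periodic w (a - b) := by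
  rw [circulant_add, add_mulVec, funext_iff]
  simp only [Pi.add_apply, circulant_single_one_mulVec_apply, Pi.zero_apply, CharTwo.add_eq_zero]
  refine ⟨fun h x => ?_, fun h i => ?_⟩
  · simpa [add_sub_assoc] using (h (x + a)).symm
  · simpa using (h (i - a)).symm

theorem Matrix.rank_circulant_single_add_single_add_index [Field R] [CharP R 2] (a b : G) :
    (circulant (Pi.single a 1 + Pi.single b 1) : Matrix G G R).rank +
      (AddSubgroup.zmultiples (a - b)).index = Nat.card G := by
  classical
  set M : Matrix G G R := circulant (Pi.single a 1 + Pi.single b 1)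
  let π : G → G ⧸ AddSubgroup.zmultiples (a - b) := QuotientAddGroup.mk
  have hker : LinearMap.ker M.mulVecLin = LinearMap.range (LinearMap.funLeft R R π) := by
    ext w
    rw [LinearMap.mem_ker, mulVecLin_apply, circulant_single_add_single_mulVec_eq_zero_iff,
      mem_range_funLeft_mk_zmultiples_iff]
  have hinj : Injective (LinearMap.funLeft R R π) :=
    LinearMap.funLeft_injective_of_surjective R R π QuotientAddGroup.mk_surjective
  rw [rank, Nat.card_eq_fintype_card, ← Module.finrank_fintype_fun_eq_card (R := R),
    ← M.mulVecLin.finrank_range_add_finrank_ker, hker, LinearMap.finrank_range_of_inj hinj,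
    Module.finrank_fintype_fun_eq_card, AddSubgroup.index_eq_card, Nat.card_eq_fintype_card]

end Circulant

theorem ZMod.index_zmultiples_natCast {n : ℕ} (hn : n ≠ 0) (a : ℕ) :
    (AddSubgroup.zmultiples (a : ZMod n)).index = n.gcd a := by
  have h := (AddSubgroup.zmultiples (a : ZMod n)).index_mul_card
  rw [Nat.card_zmultiples, ZMod.addOrderOf_coe _ hn, Nat.card_zmod] at h
  have hpos : 0 < n / n.gcd a :=
    Nat.div_pos (Nat.gcd_le_left a (Nat.pos_of_ne_zero hn))
      (Nat.gcd_pos_of_pos_left a (Nat.pos_of_ne_zero hn))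
  exact Nat.eq_of_mul_eq_mul_right hpos
    (h.trans (Nat.mul_div_cancel' (Nat.gcd_dvd_left n a)).symm)

theorem ZMod.finEquiv_apply {n : ℕ} [NeZero n] (i : Fin n) :
    ZMod.finEquiv n i = (i : ZMod n) := by
  obtain _ | n := n
  · exact absurd rfl (NeZero.ne 0)
  · exact (Fin.cast_val_eq_self i).symm

/-- Rank over `F₂` of the `L × L` circulant matrix with ones exactly at positions
`i − j ≡ ±2 (mod L)`: it is `L − 1` for odd `L`, `L − 4` when `4 ∣ L`, and `L − 2`
when `L` is even but `4 ∤ L`; in particular it equals `4⌈L/4⌉ − 4` for even `L`. -/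
theorem rank_circulant_pm_two (L : ℕ) (hL : 4 < L)
    (C : Matrix (Fin L) (Fin L) (ZMod 2))
    (hC : ∀ i j : Fin L,
      C i j = if ((i : ZMod L) - (j : ZMod L) = 2 ∨ (i : ZMod L) - (j : ZMod L) = -2)
        then 1 else 0) :
    (Odd L → C.rank = L - 1) ∧
    (4 ∣ L → C.rank = L - 4) ∧
    (Even L → ¬ (4 ∣ L) → C.rank = L - 2) ∧
    (Even L → C.rank = 4 * ((L + 3) / 4) - 4) := by
  have hL0 : L ≠ 0 := by omega
  have : NeZero L := ⟨hL0⟩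
  have h4 : (2 : ZMod L) - -2 = ((4 : ℕ) : ZMod L) := by push_cast; ring
  have h2 : (2 : ZMod L) ≠ -2 := by
    rw [Ne, ← sub_eq_zero, h4, ZMod.natCast_eq_zero_iff]
    exact fun h => absurd (Nat.le_of_dvd (by norm_num) h) (by omega)
  have hCe : C = (circulant (Pi.single 2 1 + Pi.single (-2) 1)).submatrix
      (ZMod.finEquiv L : Fin L ≃ ZMod L) (ZMod.finEquiv L : Fin L ≃ ZMod L) := by
    ext i j
    rw [hC, submatrix_apply, circulant_apply]
    simp only [RingEquiv.coe_toEquiv, ZMod.finEquiv_apply, Pi.add_apply, Pi.single_apply]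
    split_ifs <;> simp_all
  have hrank : C.rank + L.gcd 4 = L := by
    rw [hCe, rank_submatrix, ← ZMod.index_zmultiples_natCast hL0, ← h4,
      rank_circulant_single_add_single_add_index, Nat.card_zmod]
  rw [Nat.gcd_comm, Nat.gcd_rec] at hrank
  simp only [Nat.odd_iff, Nat.even_iff]
  have : L % 4 < 4 := Nat.mod_lt _ (by norm_num)
  interval_cases h : L % 4 <;> norm_num at hrank <;> omega
end
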